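/- arXiv:1508.01373 — 7 statements merged into one kernel-verified Lean document; each statement's English description precedes it below -/
import Mathlib

section
/- For any even integers b₁,…,bₙ with bᵢ ≠ 0 for i ≥ 2, the value of the finite even-integer continued fraction [b₁,…,bₙ] is an ∞-rational, i.e., a rational number a/b in lowest terms with a and b of opposite parity (or ∞ when n = 0). -/
open Filter Topology OnePoint

/-- Inverse on ℚ ∪ {∞} (`Option.none` = ∞): 1/∞ = 0 and 1/0 = ∞. -/
def cfInv : Option ℚ → Option ℚ
  | Option.none => Option.some 0
  | Option.some q => if q = 0 then Option.none else Option.some q⁻¹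

/-- Value of the finite continued fraction [b₁,…,bₙ] in ℚ ∪ {∞},
with `cfVal [] = Option.none` (that is, ∞). -/
def cfVal : List ℤ → Option ℚ
  | [] => Option.none
  | b :: t => (cfInv (cfVal t)).map (fun q => (b : ℚ) + q)

/-- Embed ℚ ∪ {∞} into the extended real line ℝ ∪ {∞}. -/
def toOP : Option ℚ → OnePoint ℝ
  | Option.none => ∞
  | Option.some q => ((q : ℝ) : OnePoint ℝ)

/-- The n-th convergent (value of the first n+1 terms) of the continued fraction
with coefficients `b 0, b 1, …`. -/
def cfConv (b : ℕ → ℤ) (n : ℕ) : Option ℚ := cfVal ((List.range (n + 1)).map b)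

/-- `b 0, b 1, …` is an even-integer continued fraction. -/
def IsEICF (b : ℕ → ℤ) : Prop := (∀ i, Even (b i)) ∧ ∀ i ≥ 1, b i ≠ 0

/-- The even-integer continued fraction `b` is an expansion of `x`:
its convergents tend to `x` in the extended real line. -/
def IsEICFExpansion (b : ℕ → ℤ) (x : OnePoint ℝ) : Prop :=
  IsEICF b ∧ Tendsto (fun n => toOP (cfConv b n)) atTop (𝓝 x)

/-!
The parity of `num + den` is unchanged by `q ↦ b + q` for even `b` (the denominator stays,
the numerator moves by `b * den`) and by `q ↦ 1/q` (numerator and denominator swap up to sign).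
Reading the continued fraction from the back, the reciprocal of every tail value is a rational
`r` with `|r| < 1`, and since `|b| ≥ 2` for a nonzero even `b`, the next value `b + r` has
`|b + r| > 1`; in particular it is never `0`, so `∞` never reappears.
-/

namespace Rat

theorem intCast_add_num (b : ℤ) (q : ℚ) : ((b : ℚ) + q).num = b * q.den + q.num := by
  have h := mul_den_eq_num ((b : ℚ) + q)
  rw [intCast_add_den, add_mul, mul_den_eq_num] at h
  exact_mod_cast h.symm

theorem odd_num_add_den_intCast_add_iff {b : ℤ} (hb : Even b) (q : ℚ) :
    Odd (((b : ℚ) + q).num + ((b : ℚ) + q).den) ↔ Odd (q.num + q.den) := by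
  rw [intCast_add_num, intCast_add_den, add_assoc, Int.odd_add']
  simp [hb.mul_right]

theorem odd_num_add_den_inv_iff (q : ℚ) :
    Odd (q⁻¹.num + q⁻¹.den) ↔ Odd (q.num + q.den) := by
  rcases eq_or_ne q 0 with rfl | hq
  · simp
  · have hsign : Odd q.num.sign := Int.natAbs_odd.mp <| by
      rw [Int.natAbs_sign_of_ne_zero (num_ne_zero.mpr hq)]; exact odd_one
    rw [num_inv, den_inv_of_ne_zero hq, Int.natCast_natAbs, add_comm, Int.odd_add', even_abs,
      Int.odd_add', Int.odd_mul]
    simp [hsign, parity_simps]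

end Rat

theorem Int.two_le_abs_of_even {b : ℤ} (hb : Even b) (hb0 : b ≠ 0) : 2 ≤ |b| := by
  obtain ⟨k, rfl⟩ := hb
  rw [abs_eq_natAbs]
  omega

theorem one_lt_abs_intCast_add {b : ℤ} (hb : Even b) (hb0 : b ≠ 0) {r : ℚ} (hr : |r| < 1) :
    1 < |(b : ℚ) + r| := by
  have hb2 : (2 : ℚ) ≤ |(b : ℚ)| := by exact_mod_cast Int.two_le_abs_of_even hb hb0
  have := abs_sub_abs_le_abs_add (b : ℚ) r
  linarith

theorem cfInv_some_of_ne_zero {q : ℚ} (hq : q ≠ 0) : cfInv (Option.some q) = Option.some q⁻¹ :=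
  if_neg hq

theorem exists_cfInv_cfVal_eq_some (t : List ℤ) (heven : ∀ b ∈ t, Even b)
    (hnz : ∀ b ∈ t, b ≠ 0) :
    ∃ r : ℚ, cfInv (cfVal t) = Option.some r ∧ |r| < 1 ∧ Odd (r.num + r.den) := by
  induction t with
  | nil => exact ⟨0, rfl, by simp, by simp⟩
  | cons b t ih =>
    obtain ⟨r, hr, hr1, hodd⟩ :=
      ih (fun x hx => heven x (.tail b hx)) (fun x hx => hnz x (.tail b hx))
    have hb := heven b (.head t)
    have hbr := one_lt_abs_intCast_add hb (hnz b (.head t)) hr1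
    have hval : cfVal (b :: t) = Option.some ((b : ℚ) + r) := by simp [cfVal, hr]
    refine ⟨((b : ℚ) + r)⁻¹, ?_, ?_, ?_⟩
    · rw [hval, cfInv_some_of_ne_zero (abs_pos.mp (one_pos.trans hbr))]
    · rw [abs_inv]
      exact inv_lt_one_of_one_lt₀ hbr
    · rwa [Rat.odd_num_add_den_inv_iff, Rat.odd_num_add_den_intCast_add_iff hb]

/-- The value of any finite even-integer continued fraction is an ∞-rational
(or ∞ itself when the continued fraction is empty). -/
theorem eicf_finite_value_is_infty_rational (l : List ℤ)
    (heven : ∀ b ∈ l, Even b) (hnz : ∀ b ∈ l.tail, b ≠ 0) :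
    (l = [] ∧ cfVal l = Option.none) ∨
      ∃ q : ℚ, cfVal l = Option.some q ∧ Odd (q.num + (q.den : ℤ)) := by
  cases l with
  | nil => exact .inl ⟨rfl, rfl⟩
  | cons b t =>
    obtain ⟨r, hr, -, hodd⟩ :=
      exists_cfInv_cfVal_eq_some t (fun x hx => heven x (.tail b hx)) hnz
    exact .inr ⟨(b : ℚ) + r, by simp [cfVal, hr],
      (Rat.odd_num_add_den_intCast_add_iff (heven b (.head t)) r).mpr hodd⟩
end

section
/- Every ∞-rational has a unique finite even-integer continued fraction expansion; that is, for each rational a/b in lowest terms with a and b of opposite parity there is exactly one finite sequence of even integers b₁,…,bₙ with bᵢ ≠ 0 for i ≥ 2 whose continued fraction value equals a/b. -/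
open Filter Topology OnePoint

lemma cfVal_cons (b : ℤ) (t : List ℤ) :
    cfVal (b :: t) = (cfInv (cfVal t)).map (fun q => (b : ℚ) + q) := rfl

lemma cfInv_inj : Function.Injective cfInv := by
  intro a b h
  cases a <;> cases b <;> simp only [cfInv] at h
  case none.none => rfl
  case none.some q => split_ifs at h with hq; exact absurd ((Option.some.inj h).symm) (inv_ne_zero hq)
  case some.none p => split_ifs at h with hp; exact absurd (Option.some.inj h) (inv_ne_zero hp)
  case some.some p q => split_ifs at h with hp hq <;> simp_all

lemma cfVal_close : ∀ (l : List ℤ) (b : ℤ), (∀ x ∈ l, Even x) → (∀ x ∈ l, x ≠ 0) →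
    ∃ v : ℚ, cfVal (b :: l) = Option.some v ∧ |v - b| < 1 := by
  intro l
  induction l with
  | nil =>
    intro b _ _
    exact ⟨b, by simp [cfVal, cfInv], by simp⟩
  | cons c t ih =>
    intro b he hn
    obtain ⟨u, hu, hud⟩ := ih c (fun x hx => he x (List.mem_cons_of_mem _ hx))
      (fun x hx => hn x (List.mem_cons_of_mem _ hx))
    have hc : c ≠ 0 := hn c (List.mem_cons_self)
    obtain ⟨k, hk⟩ := he c (List.mem_cons_self)
    have hc2 : (2 : ℚ) ≤ |(c : ℚ)| := by
      rw [← Int.cast_abs]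
      exact_mod_cast (by rcases abs_cases c with ⟨h,_⟩|⟨h,_⟩ <;> omega : (2:ℤ) ≤ |c|)
    have hu1 : 1 < |u| := by
      have h1 := abs_sub_abs_le_abs_sub (c : ℚ) u
      rw [abs_sub_comm] at h1
      linarith
    have hu0 : u ≠ 0 := by
      intro h; rw [h] at hu1; norm_num at hu1
    refine ⟨b + u⁻¹, ?_, ?_⟩
    · rw [cfVal_cons, hu]; simp [cfInv, hu0]
    · rw [add_sub_cancel_left, abs_inv, inv_lt_one_iff₀]
      right; exact hu1

lemma cfVal_inj : ∀ (l₁ l₂ : List ℤ), (∀ x ∈ l₁, Even x) → (∀ x ∈ l₁.tail, x ≠ 0) →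
    (∀ x ∈ l₂, Even x) → (∀ x ∈ l₂.tail, x ≠ 0) → cfVal l₁ = cfVal l₂ → l₁ = l₂ := by
  intro l₁
  induction l₁ with
  | nil =>
    intro l₂ _ _ he2 hn2 h
    cases l₂ with
    | nil => rfl
    | cons b t =>
      obtain ⟨v, hv, _⟩ := cfVal_close t b (fun x hx => he2 x (List.mem_cons_of_mem _ hx)) hn2
      rw [cfVal] at h
      rw [← h] at hv
      exact absurd hv (by simp)
  | cons b t ih =>
    intro l₂ he1 hn1 he2 hn2 h
    cases l₂ with
    | nil =>
      obtain ⟨v, hv, _⟩ := cfVal_close t b (fun x hx => he1 x (List.mem_cons_of_mem _ hx)) hn1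
      rw [hv] at h
      exact absurd h (by simp [cfVal])
    | cons b' t' =>
      obtain ⟨v, hv, hvd⟩ := cfVal_close t b (fun x hx => he1 x (List.mem_cons_of_mem _ hx)) hn1
      obtain ⟨v', hv', hvd'⟩ := cfVal_close t' b' (fun x hx => he2 x (List.mem_cons_of_mem _ hx)) hn2
      have hvv : v = v' := by rw [hv, hv'] at h; exact Option.some.inj h
      have hbb : b = b' := by
        obtain ⟨k, hk⟩ := he1 b (List.mem_cons_self)
        obtain ⟨k', hk'⟩ := he2 b' (List.mem_cons_self)
        have : |(b : ℚ) - b'| < 2 := by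
          calc |(b:ℚ) - b'| = |(b - v) + (v' - b')| := by rw [hvv]; ring_nf
          _ ≤ |(b:ℚ) - v| + |v' - b'| := abs_add_le _ _
          _ < 2 := by rw [abs_sub_comm (b:ℚ) v]; linarith
        have h2 : |b - b'| < 2 := by
          exact_mod_cast (by push_cast; exact this : |((b - b' : ℤ) : ℚ)| < 2)
        rcases abs_cases (b - b') with ⟨h3,_⟩|⟨h3,_⟩ <;> omega
      subst hbb
      have ht : cfVal t = cfVal t' := by
        rw [cfVal_cons, cfVal_cons] at h
        apply cfInv_inj
        cases h1 : cfInv (cfVal t) <;> cases h2 : cfInv (cfVal t') <;>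
          rw [h1, h2] at h <;> simp_all
      rw [ih t' (fun x hx => he1 x (List.mem_cons_of_mem _ hx))
        (fun x hx => hn1 x (List.tail_subset t hx))
        (fun x hx => he2 x (List.mem_cons_of_mem _ hx))
        (fun x hx => hn2 x (List.tail_subset t' hx)) ht]

lemma rat_inv_eq (s : ℚ) : s⁻¹ = (s.den : ℚ) / (s.num : ℚ) := by
  conv_lhs => rw [← Rat.num_div_den s]
  rw [inv_div]

lemma cfVal_exists : ∀ n : ℕ, ∀ q : ℚ, q.den = n → Odd (q.num + (q.den : ℤ)) →
    ∃ l : List ℤ, (∀ b ∈ l, Even b) ∧ (∀ b ∈ l.tail, b ≠ 0) ∧ cfVal l = Option.some q := by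
  intro n
  induction n using Nat.strong_induction_on with
  | _ n ih =>
  intro q hden hq
  by_cases h1 : q.den = 1
  · have hnum : Even q.num := by
      rw [h1] at hq
      rw [Int.odd_iff] at hq
      rw [Int.even_iff]
      omega
    refine ⟨[q.num], ?_, ?_, ?_⟩
    · intro b hb; simp only [List.mem_singleton] at hb; subst hb; exact hnum
    · intro b hb; simp at hb
    · have : ((q.num : ℚ)) = q := Rat.coe_int_num_of_den_eq_one h1
      simp [cfVal, cfInv, this]
  · -- q.den ≥ 2
    have hdq0 : (0 : ℚ) < (q.den : ℚ) := by exact_mod_cast q.pos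
    have hq_ne_int : ∀ m : ℤ, q ≠ (m : ℚ) := by
      intro m hm
      exact h1 (by rw [hm, Rat.den_intCast])
    set c : ℤ := 2 * round (q / 2) with hcdef
    have hce : Even c := ⟨round (q / 2), by rw [hcdef]; ring⟩
    set r : ℚ := q - c with hrdef
    have hr0 : r ≠ 0 := by
      intro h
      exact hq_ne_int c (by rw [hrdef] at h; linarith [sub_eq_zero.mp h])
    have habs : |r| ≤ 1 := by
      have h2 := abs_sub_round (q / 2)
      have : r = 2 * (q / 2 - round (q / 2)) := by rw [hrdef, hcdef]; push_cast; ring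
      rw [this, abs_mul, abs_two]
      linarith
    have habs_lt : |r| < 1 := by
      rcases lt_or_eq_of_le habs with h | h
      · exact h
      · exfalso
        rcases abs_eq (by norm_num : (0:ℚ) ≤ 1) |>.mp h with h2 | h2
        · exact hq_ne_int (c + 1) (by rw [hrdef] at h2; push_cast; linarith)
        · exact hq_ne_int (c - 1) (by rw [hrdef] at h2; push_cast; linarith)
    -- num and den of r
    have h0 : IsCoprime q.num (q.den : ℤ) := Int.isCoprime_iff_gcd_eq_one.mpr q.reduced
    have h2 : IsCoprime (q.num - c * q.den) (q.den : ℤ) := by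
      have := h0.add_mul_left_left (-c)
      have heq : q.num + (q.den : ℤ) * (-c) = q.num - c * q.den := by ring
      rwa [heq] at this
    have hcop : Nat.Coprime (q.num - c * q.den).natAbs ((q.den : ℤ)).natAbs :=
      Int.isCoprime_iff_gcd_eq_one.mp h2
    have key : r = ((q.num - c * q.den : ℤ) : ℚ) / ((q.den : ℤ) : ℚ) := by
      rw [hrdef, eq_div_iff (by exact_mod_cast hdq0.ne')]
      push_cast
      rw [sub_mul, Rat.mul_den_eq_num]
      try ring
    have hrden : ((r.den : ℤ)) = (q.den : ℤ) := by
      rw [key]; exact Rat.den_div_eq_of_coprime (by exact_mod_cast q.pos) hcop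
    have hrnum : r.num = q.num - c * q.den := by
      rw [key]; exact Rat.num_div_eq_of_coprime (by exact_mod_cast q.pos) hcop
    -- |r.num| < r.den
    have hrd0 : (0 : ℚ) < (r.den : ℚ) := by exact_mod_cast r.pos
    have hnum_lt : |r.num| < (r.den : ℤ) := by
      have : |((r.num : ℚ))| < (r.den : ℚ) := by
        have h3 : r = (r.num : ℚ) / r.den := (Rat.num_div_den r).symm
        rw [h3, abs_div, abs_of_pos hrd0, div_lt_one hrd0] at habs_lt
        exact habs_lt
      rw [← Int.cast_abs] at this
      exact_mod_cast this
    have hrnum0 : r.num ≠ 0 := Rat.num_ne_zero.mpr hr0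
    -- q' = r⁻¹
    set q' : ℚ := r⁻¹ with hq'def
    have hq'nd : (q'.num = (r.den : ℤ) ∧ (q'.den : ℤ) = r.num) ∨
        (q'.num = -(r.den : ℤ) ∧ (q'.den : ℤ) = -r.num) := by
      have hrr : r = (r.num : ℚ) / r.den := (Rat.num_div_den r).symm
      rcases lt_or_gt_of_ne hrnum0 with hneg | hpos
      · right
        have hkey : q' = ((-(r.den : ℤ) : ℤ) : ℚ) / ((-r.num : ℤ) : ℚ) := by
          rw [hq'def, rat_inv_eq r]
          push_cast
          rw [← neg_div_neg_eq]
        have hcop2 : Nat.Coprime (-(r.den:ℤ)).natAbs (-r.num).natAbs := by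
          simp only [Int.natAbs_neg]
          exact Nat.Coprime.symm r.reduced
        constructor
        · rw [hkey]; exact Rat.num_div_eq_of_coprime (by omega) hcop2
        · rw [hkey]; exact Rat.den_div_eq_of_coprime (by omega) hcop2
      · left
        have hkey : q' = (((r.den : ℤ) : ℤ) : ℚ) / ((r.num : ℤ) : ℚ) := by
          rw [hq'def, rat_inv_eq r]
          push_cast
          ring
        have hcop2 : Nat.Coprime ((r.den:ℤ)).natAbs (r.num).natAbs := by
          simp only [Int.natAbs_natCast]
          exact Nat.Coprime.symm r.reduced
        constructor
        · rw [hkey]; exact Rat.num_div_eq_of_coprime hpos hcop2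
        · rw [hkey]; exact Rat.den_div_eq_of_coprime hpos hcop2
    have hq'den_lt : q'.den < n := by
      rcases hq'nd with ⟨_, hd⟩ | ⟨_, hd⟩ <;>
      · rw [← hden]
        have := hnum_lt
        have h5 := hrden
        rcases abs_cases r.num with ⟨h6, _⟩ | ⟨h6, _⟩ <;> omega
    have hrodd : Odd (r.num + (r.den : ℤ)) := by
      have heq : r.num + (r.den : ℤ) = (q.num + q.den) - c * q.den := by
        rw [hrnum, hrden]; ring
      rw [heq]
      exact hq.sub_even (hce.mul_right _)
    have hq'odd : Odd (q'.num + (q'.den : ℤ)) := by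
      rcases hq'nd with ⟨hn', hd'⟩ | ⟨hn', hd'⟩
      · have : q'.num + (q'.den : ℤ) = r.num + (r.den : ℤ) := by rw [hn', hd']; ring
        rw [this]; exact hrodd
      · have : q'.num + (q'.den : ℤ) = -(r.num + (r.den : ℤ)) := by rw [hn', hd']; ring
        rw [this]; exact hrodd.neg
    obtain ⟨l', hle, hln, hlv⟩ := ih q'.den hq'den_lt q' rfl hq'odd
    -- l' nonempty
    have habs_pos : 0 < |r| := abs_pos.mpr hr0
    have hq'big : 1 < |q'| := by
      rw [hq'def, abs_inv]
      rw [lt_inv_comm₀ (by norm_num) habs_pos]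
      simpa using habs_lt
    have hq'0 : q' ≠ 0 := by
      intro h; rw [h] at hq'big; norm_num at hq'big
    cases l' with
    | nil => rw [cfVal] at hlv; exact absurd hlv (by simp)
    | cons h' t' =>
      obtain ⟨v, hv, hvd⟩ := cfVal_close t' h'
        (fun x hx => hle x (List.mem_cons_of_mem _ hx)) hln
      have hvq : v = q' := by rw [hlv] at hv; exact (Option.some.inj hv).symm
      have hh0 : h' ≠ 0 := by
        intro h
        rw [h, hvq] at hvd
        simp only [Int.cast_zero, sub_zero] at hvd
        linarith
      refine ⟨c :: h' :: t', ?_, ?_, ?_⟩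
      · intro b hb
        rcases List.mem_cons.mp hb with h | h
        · subst h; exact hce
        · exact hle b h
      · intro b hb
        simp only [List.tail_cons] at hb
        rcases List.mem_cons.mp hb with h | h
        · subst h; exact hh0
        · exact hln b h
      · rw [cfVal_cons, hlv]
        simp only [cfInv, hq'0, if_neg hq'0, Option.map_some]
        rw [hq'def, inv_inv, hrdef]
        norm_num


/-- Each ∞-rational has a unique finite even-integer continued fraction expansion. -/
theorem eicf_finite_expansion_exists_unique (q : ℚ) (hq : Odd (q.num + (q.den : ℤ))) :
    ∃! l : List ℤ, (∀ b ∈ l, Even b) ∧ (∀ b ∈ l.tail, b ≠ 0) ∧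
      cfVal l = Option.some q := by
  obtain ⟨l, hle, hln, hlv⟩ := cfVal_exists q.den q rfl hq
  refine ⟨l, ⟨hle, hln, hlv⟩, ?_⟩
  rintro l' ⟨hle', hln', hlv'⟩
  exact cfVal_inj l' l hle' hln' hle hln (by rw [hlv, hlv'])
end

section
/- Every infinite even-integer continued fraction converges: if b₁,b₂,… are even integers with bᵢ ≠ 0 for all i ≥ 2, then the sequence of convergents Tₙ(∞), where Tₙ = t₁∘⋯∘tₙ and tᵢ(z) = bᵢ + 1/z, converges in the extended real line ℝ ∪ {∞}. -/
/-!
Write the convergents as `pₙ / qₙ` via the classical numerator and denominator recurrences.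
Even nonzero integers satisfy `|bᵢ| ≥ 2`, which forces `|qₙ₊₁| ≥ |qₙ| + 1`, hence `|qₙ| ≥ n + 1`
(in particular no convergent is `∞`). The determinant identity `pₙ qₙ₊₁ - pₙ₊₁ qₙ = ±1` then
bounds the distance of consecutive convergents by `1 / (n + 1)²`, which is summable, so the
convergents form a Cauchy sequence in `ℝ`.
-/

open Filter Topology OnePoint

def cfNum (b : ℕ → ℤ) : ℕ → ℤ
  | 0 => b 0
  | 1 => b 1 * b 0 + 1
  | n + 2 => b (n + 2) * cfNum b (n + 1) + cfNum b n

def cfDen (b : ℕ → ℤ) : ℕ → ℤ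
  | 0 => 1
  | 1 => b 1
  | n + 2 => b (n + 2) * cfDen b (n + 1) + cfDen b n

section

variable (b : ℕ → ℤ)

lemma cfConv_zero : cfConv b 0 = Option.some (b 0 : ℚ) := by
  simp [cfConv, cfVal, cfInv]

lemma cfConv_succ (n : ℕ) :
    cfConv b (n + 1) = (cfInv (cfConv (fun i => b (i + 1)) n)).map (fun q => (b 0 : ℚ) + q) := by
  rw [cfConv, List.range_succ_eq_map, List.map_cons, List.map_map, cfVal]
  rfl

lemma cfDen_succ_eq_cfNum_tail : ∀ n, cfDen b (n + 1) = cfNum (fun i => b (i + 1)) n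
  | 0 => rfl
  | 1 => by simp [cfNum, cfDen]
  | n + 2 => by
    rw [cfDen, cfDen_succ_eq_cfNum_tail (n + 1), cfDen_succ_eq_cfNum_tail n, cfNum]

lemma cfNum_succ_eq_tail :
    ∀ n, cfNum b (n + 1) = b 0 * cfNum (fun i => b (i + 1)) n + cfDen (fun i => b (i + 1)) n
  | 0 => by simp [cfNum, cfDen]; ring
  | 1 => by simp [cfNum, cfDen]; ring
  | n + 2 => by
    rw [cfNum, cfNum_succ_eq_tail (n + 1), cfNum_succ_eq_tail n]
    simp only [cfNum, cfDen]
    ring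

lemma cfNum_mul_cfDen_succ_eq_cfNum_tail_sub :
    ∀ n, cfNum b n * cfDen b (n + 1) - cfNum b (n + 1) * cfDen b n = (-1) ^ (n + 1)
  | 0 => by simp [cfNum, cfDen]; ring
  | n + 1 => by
    rw [cfNum, cfDen, pow_succ]
    linear_combination (-1 : ℤ) * cfNum_mul_cfDen_succ_eq_cfNum_tail_sub n

variable {b} (hb : ∀ i ≥ 1, 2 ≤ |b i|)
include hb

lemma abs_cfDen_lt_abs_cfDen_succ_eq_cfNum_tail : ∀ n, |cfDen b n| < |cfDen b (n + 1)|
  | 0 => by simpa [cfDen] using (hb 1 le_rfl).trans_lt' one_lt_two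
  | n + 1 => by
    have hq := abs_cfDen_lt_abs_cfDen_succ_eq_cfNum_tail n
    have hbn := hb (n + 2) (by omega)
    have htri : |b (n + 2)| * |cfDen b (n + 1)| ≤ |cfDen b (n + 2)| + |cfDen b n| := by
      rw [← abs_mul, show b (n + 2) * cfDen b (n + 1) = cfDen b (n + 2) - cfDen b n by
        rw [cfDen]; ring]
      exact abs_sub _ _
    nlinarith [abs_nonneg (cfDen b (n + 1))]

lemma natCast_add_one_le_abs_cfDen : ∀ n : ℕ, (n : ℤ) + 1 ≤ |cfDen b n|
  | 0 => by simp [cfDen]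
  | n + 1 => by
    have := abs_cfDen_lt_abs_cfDen_succ_eq_cfNum_tail hb n
    have := natCast_add_one_le_abs_cfDen n
    push_cast
    omega

lemma cfDen_ne_zero (n : ℕ) : cfDen b n ≠ 0 :=
  abs_pos.mp (by have := natCast_add_one_le_abs_cfDen hb n; omega)

end

lemma cfConv_eq_some_cfNum_div_cfDen :
    ∀ (n : ℕ) (b : ℕ → ℤ), (∀ i ≥ 1, 2 ≤ |b i|) →
      cfConv b n = Option.some ((cfNum b n : ℚ) / cfDen b n)
  | 0, b, _ => by simp [cfConv_zero, cfNum, cfDen]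
  | n + 1, b, hb => by
    have hb' : ∀ i ≥ 1, 2 ≤ |b (i + 1)| := fun i _ => hb (i + 1) (by omega)
    -- the numerator of the tail is the denominator of `b`, so `cfInv` does not hit `0`
    have hp : (cfNum (fun i => b (i + 1)) n : ℚ) ≠ 0 := by
      exact_mod_cast cfDen_succ_eq_cfNum_tail b n ▸ cfDen_ne_zero hb (n + 1)
    have hq : (cfDen (fun i => b (i + 1)) n : ℚ) ≠ 0 := by
      exact_mod_cast cfDen_ne_zero hb' n
    rw [cfConv_succ, cfConv_eq_some_cfNum_div_cfDen n _ hb', cfNum_succ_eq_tail, cfDen_succ_eq_cfNum_tail]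
    simp only [cfInv, div_eq_zero_iff, hp, hq, or_self, if_false, Option.map_some, inv_div]
    push_cast
    field_simp

lemma abs_sub_cfNum_div_cfDen_succ_eq_cfNum_tail_le {b : ℕ → ℤ} (hb : ∀ i ≥ 1, 2 ≤ |b i|) (n : ℕ) :
    |(cfNum b n : ℝ) / cfDen b n - cfNum b (n + 1) / cfDen b (n + 1)| ≤ 1 / ((n : ℝ) + 1) ^ 2 := by
  have hq : ∀ m : ℕ, ((m : ℝ) + 1) ≤ |(cfDen b m : ℝ)| := fun m => by
    exact_mod_cast natCast_add_one_le_abs_cfDen hb m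
  have hq' := hq (n + 1)
  push_cast at hq'
  rw [div_sub_div _ _ (by exact_mod_cast cfDen_ne_zero hb n)
    (by exact_mod_cast cfDen_ne_zero hb (n + 1))]
  have hdet := congrArg (fun z : ℤ => (z : ℝ)) (cfNum_mul_cfDen_succ_eq_cfNum_tail_sub b n)
  push_cast at hdet
  rw [mul_comm (cfDen b n : ℝ), hdet, abs_div, abs_mul, abs_pow, abs_neg, abs_one, one_pow]
  gcongr
  nlinarith [hq n, hq']

theorem exists_tendsto_cfConv_of_two_le_abs {b : ℕ → ℤ} (hb : ∀ i ≥ 1, 2 ≤ |b i|) :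
    ∃ x : ℝ, Tendsto (fun n => toOP (cfConv b n)) atTop (𝓝 (x : OnePoint ℝ)) := by
  have hsum : Summable (fun n : ℕ => 1 / ((n : ℝ) + 1) ^ 2) := by
    simpa using (summable_nat_add_iff 1).mpr (Real.summable_one_div_nat_pow.mpr one_lt_two)
  have hcauchy := cauchySeq_of_dist_le_of_summable _
    (fun n => (Real.dist_eq _ _).trans_le (abs_sub_cfNum_div_cfDen_succ_eq_cfNum_tail_le hb n)) hsum
  obtain ⟨x, hx⟩ := cauchySeq_tendsto_of_complete hcauchy
  refine ⟨x, ((continuous_coe.tendsto x).comp hx).congr fun n => ?_⟩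
  simp [cfConv_eq_some_cfNum_div_cfDen n b hb, toOP]

lemma two_le_abs_of_even_of_ne_zero {m : ℤ} (heven : Even m) (hm : m ≠ 0) : 2 ≤ |m| := by
  obtain ⟨k, rfl⟩ := heven
  rw [le_abs]
  omega

/-- Every infinite even-integer continued fraction converges in the extended real line. -/
theorem eicf_infinite_converges (b : ℕ → ℤ) (heven : ∀ i, Even (b i))
    (hnz : ∀ i ≥ 1, b i ≠ 0) :
    ∃ x : OnePoint ℝ, Tendsto (fun n => toOP (cfConv b n)) atTop (𝓝 x) := by
  obtain ⟨x, hx⟩ := exists_tendsto_cfConv_of_two_le_abs fun i hi =>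
    two_le_abs_of_even_of_ne_zero (heven i) (hnz i hi)
  exact ⟨x, hx⟩
end

section
/- The value of any convergent infinite even-integer continued fraction is never an ∞-rational: it is either irrational or a rational p/q in lowest terms with p and q both odd. -/
/-!
With continuants `p n, q n` (so that `p (n+1) / q (n+1)` is the `n`-th convergent), `|b i| ≥ 2`
makes `|q n|` strictly increasing, and `p (n+1) q n - p n q (n+1) = ±1` then makes the convergents
Cauchy with `|r - p n / q n| ≤ 1 / |q n|` for the limit `r`. If `r = A / C` in lowest terms,
`u n = A q n - C p n` is bounded by `C` and obeys the same recurrence, so `|u n|` can never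
increase. Since all `b i` are even, `u n + u (n+1) ≡ u 0 + u 1 ≡ A + C (mod 2)`; if `A / C`
were an ∞-rational this is odd, so `|u n| ≠ |u (n+1)|` and `|u n|` would decrease forever.
-/

open Filter Topology OnePoint

def projVal (p q : ℤ) : Option ℚ := if q = 0 then Option.none else Option.some (p / q)

lemma cfInv_projVal_map_add (a : ℤ) {p q : ℤ} (hpq : p ≠ 0 ∨ q ≠ 0) :
    (cfInv (projVal p q)).map (fun x => (a : ℚ) + x) = projVal (a * p + q) p := by
  unfold projVal
  rcases eq_or_ne q 0 with rfl | hq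
  · simp [cfInv, hpq.resolve_right (not_not.mpr rfl)]
  rcases eq_or_ne p 0 with rfl | hp
  · simp [cfInv, hq]
  simp [cfInv, hp, hq]
  field_simp

def cfMat (a : ℤ) : Matrix (Fin 2) (Fin 2) ℤ := !![a, 1; 1, 0]

lemma det_prod_map_cfMat (l : List ℤ) : (l.map cfMat).prod.det = (-1) ^ l.length := by
  induction l with
  | nil => simp
  | cons a t ih =>
    rw [List.map_cons, List.prod_cons, Matrix.det_mul, ih]
    simp [cfMat, Matrix.det_fin_two_of, pow_succ]

lemma cfVal_eq_projVal (l : List ℤ) :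
    cfVal l = projVal ((l.map cfMat).prod 0 0) ((l.map cfMat).prod 1 0) := by
  induction l with
  | nil => simp [cfVal, projVal]
  | cons a t ih =>
    have hcol : (t.map cfMat).prod 0 0 ≠ 0 ∨ (t.map cfMat).prod 1 0 ≠ 0 := by
      by_contra! h
      have hdet := det_prod_map_cfMat t
      rw [Matrix.det_fin_two, h.1, h.2, zero_mul, mul_zero, sub_zero] at hdet
      exact pow_ne_zero _ (by norm_num) hdet.symm
    rw [cfVal, ih, cfInv_projVal_map_add a hcol]
    simp [cfMat, Matrix.mul_apply, Fin.sum_univ_two]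

/-- Continuants of `b`, indexed by the number of terms:
`contNum b n / contDen b n` is the value of `[b 0, …, b (n-1)]`. -/
def contNum (b : ℕ → ℤ) : ℕ → ℤ
  | 0 => 1
  | 1 => b 0
  | n + 2 => b (n + 1) * contNum b (n + 1) + contNum b n

def contDen (b : ℕ → ℤ) : ℕ → ℤ
  | 0 => 0
  | 1 => 1
  | n + 2 => b (n + 1) * contDen b (n + 1) + contDen b n

lemma prod_map_cfMat_range (b : ℕ → ℤ) (n : ℕ) :
    (((List.range (n + 1)).map b).map cfMat).prod =
      !![contNum b (n + 1), contNum b n; contDen b (n + 1), contDen b n] := by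
  induction n with
  | zero => simp [cfMat, contNum, contDen]
  | succ n ih =>
    rw [List.range_succ, List.map_append, List.map_append, List.prod_append, ih]
    ext i j
    fin_cases i <;> fin_cases j <;>
      simp [cfMat, contNum, contDen, Matrix.mul_apply, Fin.sum_univ_two, mul_comm]

lemma cfConv_eq_projVal (b : ℕ → ℤ) (n : ℕ) :
    cfConv b n = projVal (contNum b (n + 1)) (contDen b (n + 1)) := by
  rw [cfConv, cfVal_eq_projVal, prod_map_cfMat_range]
  simp

lemma contNum_mul_contDen_sub (b : ℕ → ℤ) (n : ℕ) :
    contNum b (n + 1) * contDen b n - contNum b n * contDen b (n + 1) = (-1) ^ (n + 1) := by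
  induction n with
  | zero => simp [contNum, contDen]
  | succ n ih =>
    rw [contNum, contDen, pow_succ, ← ih]
    ring

def IsCFRecurrence (b u : ℕ → ℤ) : Prop := ∀ n, u (n + 2) = b (n + 1) * u (n + 1) + u n

lemma isCFRecurrence_contNum (b : ℕ → ℤ) : IsCFRecurrence b (contNum b) := fun _ => rfl

lemma isCFRecurrence_contDen (b : ℕ → ℤ) : IsCFRecurrence b (contDen b) := fun _ => rfl

lemma IsCFRecurrence.mul_sub_mul {b u v : ℕ → ℤ} (hu : IsCFRecurrence b u)
    (hv : IsCFRecurrence b v) (A C : ℤ) : IsCFRecurrence b (fun n => A * u n - C * v n) := by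
  intro n
  simp only [hu n, hv n]
  ring

lemma abs_lt_abs_mul_add {c x y : ℤ} (hc : 2 ≤ |c|) (h : |y| < |x|) : |x| < |c * x + y| := by
  have hsub := abs_sub_abs_le_abs_sub (c * x) (-y)
  rw [sub_neg_eq_add, abs_neg, abs_mul] at hsub
  nlinarith [abs_nonneg x]

lemma two_le_abs_of_even_of_ne_zero_s3 {a : ℤ} (ha : Even a) (h0 : a ≠ 0) : 2 ≤ |a| := by
  obtain ⟨k, rfl⟩ := ha
  have : k ≠ 0 := by rintro rfl; simp at h0
  rw [← two_mul, abs_mul, abs_two]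
  linarith [Int.one_le_abs this]

section growth

variable {b u : ℕ → ℤ} (hb : ∀ i ≥ 1, 2 ≤ |b i|) (hu : IsCFRecurrence b u)
include hb hu

lemma IsCFRecurrence.abs_lt_abs_succ_of_le {n : ℕ} (h : |u n| < |u (n + 1)|) {m : ℕ}
    (hnm : n ≤ m) : |u m| < |u (m + 1)| := by
  induction m, hnm using Nat.le_induction with
  | base => exact h
  | succ m _ ih => rw [hu m]; exact abs_lt_abs_mul_add (hb (m + 1) (by omega)) ih

lemma IsCFRecurrence.abs_add_le_abs {n : ℕ} (h : |u n| < |u (n + 1)|) (k : ℕ) :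
    |u n| + k ≤ |u (n + k)| := by
  induction k with
  | zero => simp
  | succ k ih =>
    have := hu.abs_lt_abs_succ_of_le hb h (Nat.le_add_right n k)
    push_cast
    rw [← add_assoc n k 1]
    linarith

end growth

lemma abs_ne_abs_of_odd_add {x y : ℤ} (h : Odd (x + y)) : |x| ≠ |y| := by
  intro hxy
  rcases abs_eq_abs.mp hxy with rfl | rfl
  · exact Int.not_even_iff_odd.mpr h ⟨x, rfl⟩
  · exact Int.not_even_iff_odd.mpr h (by simp)

lemma odd_mul_contDen_sub_mul_contNum_zero_add_one {b : ℕ → ℤ} (hb0 : Even (b 0)) {A C : ℤ}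
    (h : Odd (A + C)) :
    Odd (A * contDen b 0 - C * contNum b 0 + (A * contDen b 1 - C * contNum b 1)) := by
  have hsum : A * contDen b 0 - C * contNum b 0 + (A * contDen b 1 - C * contNum b 1)
      = A + C - C * (b 0 + 2) := by
    simp only [contNum, contDen]
    ring
  rw [hsum]
  exact h.sub_even ((hb0.add even_two).mul_left _)

lemma IsCFRecurrence.odd_add_succ {b u : ℕ → ℤ} (heven : ∀ i, Even (b i))
    (hu : IsCFRecurrence b u) (h0 : Odd (u 0 + u 1)) (n : ℕ) : Odd (u n + u (n + 1)) := by
  induction n with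
  | zero => exact h0
  | succ n ih =>
    have hsum : u (n + 1) + u (n + 2) = b (n + 1) * u (n + 1) + (u n + u (n + 1)) := by
      rw [hu n]; ring
    rw [hsum]
    exact ((heven _).mul_right _).add_odd ih

/-- The parity invariant forbids `|u|` from ever being constant, the recurrence forbids it from
increasing once, and `|u|` cannot decrease forever. -/
theorem IsCFRecurrence.not_forall_abs_le {b u : ℕ → ℤ} (hb : ∀ i ≥ 1, 2 ≤ |b i|)
    (heven : ∀ i, Even (b i)) (hu : IsCFRecurrence b u) (h0 : Odd (u 0 + u 1)) (C : ℤ) :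
    ¬ ∀ n, |u n| ≤ C := by
  intro hC
  have hdec : ∀ n, |u (n + 1)| < |u n| := by
    intro n
    refine (lt_or_gt_of_ne (abs_ne_abs_of_odd_add (hu.odd_add_succ heven h0 n))).resolve_left ?_
    intro hinc
    have hgrow := hu.abs_add_le_abs hb hinc (C.toNat + 1)
    push_cast at hgrow
    linarith [hC (n + (C.toNat + 1)), abs_nonneg (u n), Int.self_le_toNat C]
  obtain ⟨n, hn⟩ := WellFounded.not_rel_apply_succ (r := (· < ·)) fun n => (u n).natAbs
  have := hdec n
  rw [Int.abs_eq_natAbs, Int.abs_eq_natAbs] at this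
  exact hn (by exact_mod_cast this)

section telescoping

variable {x e : ℕ → ℝ} (hstep : ∀ n, |x (n + 1) - x n| ≤ e n - e (n + 1))
include hstep

lemma abs_sub_le_sub_of_abs_succ_sub_le {n m : ℕ} (hnm : n ≤ m) :
    |x m - x n| ≤ e n - e m := by
  induction m, hnm using Nat.le_induction with
  | base => simp
  | succ m _ ih =>
    calc |x (m + 1) - x n| ≤ |x (m + 1) - x m| + |x m - x n| := abs_sub_le _ _ _
      _ ≤ e n - e (m + 1) := by linarith [hstep m]

variable (he : Tendsto e atTop (𝓝 0))
include he

lemma nonneg_of_abs_succ_sub_le (n : ℕ) : 0 ≤ e n :=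
  (antitone_nat_of_succ_le fun n => sub_nonneg.mp ((abs_nonneg _).trans (hstep n))).le_of_tendsto
    he n

lemma cauchySeq_of_abs_succ_sub_le : CauchySeq x := by
  refine cauchySeq_of_le_tendsto_0 (fun N => 2 * e N) (fun n m N hn hm => ?_)
    (by simpa using he.const_mul 2)
  have h1 := abs_sub_le_sub_of_abs_succ_sub_le hstep hn
  have h2 := abs_sub_le_sub_of_abs_succ_sub_le hstep hm
  have := nonneg_of_abs_succ_sub_le hstep he n
  have := nonneg_of_abs_succ_sub_le hstep he m
  rw [Real.dist_eq]
  calc |x n - x m| ≤ |x n - x N| + |x N - x m| := abs_sub_le _ _ _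
    _ ≤ 2 * e N := by rw [abs_sub_comm (x N)]; linarith

lemma abs_sub_le_of_tendsto_of_abs_succ_sub_le {r : ℝ} (hr : Tendsto x atTop (𝓝 r)) (n : ℕ) :
    |r - x n| ≤ e n := by
  refine le_of_tendsto ((hr.sub_const (x n)).abs) ?_
  filter_upwards [eventually_ge_atTop n] with m hm
  linarith [abs_sub_le_sub_of_abs_succ_sub_le hstep hm, nonneg_of_abs_succ_sub_le hstep he m]

end telescoping

lemma abs_div_sub_div_le {p q p' q' : ℤ} (hdet : |p' * q - p * q'| = 1) (hq : 0 < |q|)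
    (hqq : |q| < |q'|) : |(p' : ℝ) / q' - p / q| ≤ 1 / |(q : ℝ)| - 1 / |(q' : ℝ)| := by
  have hq₀ : (0 : ℝ) < |(q : ℝ)| := by exact_mod_cast hq
  have hqq' : |(q : ℝ)| + 1 ≤ |(q' : ℝ)| := by exact_mod_cast Int.add_one_le_of_lt hqq
  have hq'₀ : (0 : ℝ) < |(q' : ℝ)| := by linarith
  have hdet' : |(p' : ℝ) * q - p * q'| = 1 := by exact_mod_cast hdet
  calc |(p' : ℝ) / q' - p / q| = 1 / (|(q : ℝ)| * |(q' : ℝ)|) := by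
        rw [div_sub_div _ _ (abs_pos.mp hq'₀) (abs_pos.mp hq₀), abs_div, abs_mul, ← hdet']
        ring_nf
    _ ≤ (|(q' : ℝ)| - |(q : ℝ)|) / (|(q : ℝ)| * |(q' : ℝ)|) := by gcongr; linarith
    _ = 1 / |(q : ℝ)| - 1 / |(q' : ℝ)| := by field_simp

lemma abs_mul_sub_mul_le_of_abs_div_sub_div_le {A C p q : ℤ} (hC : 0 < C) (hq : q ≠ 0)
    (h : |(A : ℝ) / C - p / q| ≤ 1 / |(q : ℝ)|) : |A * q - C * p| ≤ C := by
  have hC' : (0 : ℝ) < C := by exact_mod_cast hC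
  have hq' : (0 : ℝ) < |(q : ℝ)| := by positivity
  have hident : ((A * q - C * p : ℤ) : ℝ) = C * q * ((A : ℝ) / C - p / q) := by
    push_cast
    field_simp
  suffices |((A * q - C * p : ℤ) : ℝ)| ≤ C by exact_mod_cast this
  calc |((A * q - C * p : ℤ) : ℝ)| = C * |(q : ℝ)| * |(A : ℝ) / C - p / q| := by
        rw [hident, abs_mul, abs_mul, abs_of_pos hC']
    _ ≤ C * |(q : ℝ)| * (1 / |(q : ℝ)|) := by gcongr
    _ = C := by field_simp

section convergents

variable {b : ℕ → ℤ} (hb : ∀ i ≥ 1, 2 ≤ |b i|)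
include hb

lemma le_abs_contDen (n : ℕ) : (n : ℤ) ≤ |contDen b n| := by
  simpa [contDen] using (isCFRecurrence_contDen b).abs_add_le_abs hb (n := 0) (by simp [contDen]) n

lemma abs_contDen_lt_succ (n : ℕ) : |contDen b n| < |contDen b (n + 1)| :=
  (isCFRecurrence_contDen b).abs_lt_abs_succ_of_le hb (n := 0) (by simp [contDen]) n.zero_le

lemma contDen_succ_ne_zero (n : ℕ) : contDen b (n + 1) ≠ 0 :=
  abs_pos.mp ((abs_nonneg _).trans_lt (abs_contDen_lt_succ hb n))

lemma toOP_cfConv (n : ℕ) :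
    toOP (cfConv b n) = (((contNum b (n + 1) : ℝ) / contDen b (n + 1) : ℝ) : OnePoint ℝ) := by
  rw [cfConv_eq_projVal, projVal, if_neg (contDen_succ_ne_zero hb n), toOP]
  push_cast
  rfl

lemma abs_convergent_succ_sub_le (n : ℕ) :
    |(contNum b (n + 2) : ℝ) / contDen b (n + 2) - contNum b (n + 1) / contDen b (n + 1)| ≤
      1 / |(contDen b (n + 1) : ℝ)| - 1 / |(contDen b (n + 2) : ℝ)| := by
  refine abs_div_sub_div_le ?_ ?_ (abs_contDen_lt_succ hb _)
  · rw [contNum_mul_contDen_sub, abs_pow, abs_neg, abs_one, one_pow]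
  · exact abs_pos.mpr (contDen_succ_ne_zero hb n)

lemma tendsto_one_div_abs_contDen :
    Tendsto (fun n => 1 / |(contDen b (n + 1) : ℝ)|) atTop (𝓝 0) := by
  refine squeeze_zero (fun n => by positivity) (fun n => ?_) tendsto_one_div_add_atTop_nhds_zero_nat
  gcongr
  exact_mod_cast le_abs_contDen hb (n + 1)

lemma cauchySeq_convergent : CauchySeq fun n => (contNum b (n + 1) : ℝ) / contDen b (n + 1) :=
  cauchySeq_of_abs_succ_sub_le (abs_convergent_succ_sub_le hb) (tendsto_one_div_abs_contDen hb)

lemma abs_mul_contDen_sub_mul_contNum_le {A C : ℤ} (hC : 0 < C)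
    (hr : Tendsto (fun n => (contNum b (n + 1) : ℝ) / contDen b (n + 1)) atTop (𝓝 (A / C)))
    (n : ℕ) : |A * contDen b n - C * contNum b n| ≤ C := by
  cases n with
  | zero => simp [contNum, contDen, abs_of_pos hC]
  | succ n =>
    exact abs_mul_sub_mul_le_of_abs_div_sub_div_le hC (contDen_succ_ne_zero hb n)
      (abs_sub_le_of_tendsto_of_abs_succ_sub_le (abs_convergent_succ_sub_le hb)
        (tendsto_one_div_abs_contDen hb) hr n)

end convergents

lemma Rat.odd_num_add_den {q : ℚ} (h : ¬ (Odd q.num ∧ Odd (q.den : ℤ))) :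
    Odd (q.num + q.den) := by
  have hcop : ¬ (Even q.num ∧ Even (q.den : ℤ)) := by
    rintro ⟨hnum, hden⟩
    have h2 := Nat.Coprime.eq_one_of_dvd (Nat.Coprime.coprime_dvd_left
      (Int.natAbs_even.mpr hnum).two_dvd q.reduced) (by exact_mod_cast hden.two_dvd)
    omega
  rw [Int.odd_add]
  rcases Int.even_or_odd q.num with hn | hn <;> rcases Int.even_or_odd (q.den : ℤ) with hd | hd
  all_goals simp_all [← Int.not_odd_iff_even]

/-- The value of a convergent infinite even-integer continued fraction is never an
∞-rational: it is either irrational or a 1-rational (reduced rational with odd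
numerator and odd denominator). -/
theorem eicf_infinite_value_irrational_or_one_rational (b : ℕ → ℤ)
    (heven : ∀ i, Even (b i)) (hnz : ∀ i ≥ 1, b i ≠ 0) (x : OnePoint ℝ)
    (hx : Tendsto (fun n => toOP (cfConv b n)) atTop (𝓝 x)) :
    (∃ r : ℝ, x = (r : OnePoint ℝ) ∧ Irrational r) ∨
      (∃ q : ℚ, x = ((q : ℝ) : OnePoint ℝ) ∧ Odd q.num ∧ Odd (q.den : ℤ)) := by
  have hb : ∀ i ≥ 1, 2 ≤ |b i| := fun i hi =>
    two_le_abs_of_even_of_ne_zero_s3 (heven i) (hnz i hi)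
  obtain ⟨r, hr⟩ := cauchySeq_tendsto_of_complete (cauchySeq_convergent hb)
  simp only [toOP_cfConv hb] at hx
  have hxr : x = r := tendsto_nhds_unique hx ((continuous_coe.tendsto r).comp hr)
  by_cases hirr : Irrational r
  · exact .inl ⟨r, hxr, hirr⟩
  obtain ⟨q, rfl⟩ := not_not.mp hirr
  refine .inr ⟨q, hxr, by_contra fun hq => ?_⟩
  rw [Rat.cast_def, ← Int.cast_natCast] at hr
  have hu := (isCFRecurrence_contDen b).mul_sub_mul (isCFRecurrence_contNum b) q.num q.den
  exact hu.not_forall_abs_le hb heven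
    (odd_mul_contDen_sub_mul_contNum_zero_add_one (heven 0) (Rat.odd_num_add_den hq)) q.den
    (abs_mul_contDen_sub_mul_contNum_le hb (by positivity) hr)
end

section
/- Every irrational real number has exactly one infinite even-integer continued fraction expansion. -/
open Filter Topology OnePoint

/-- Nearest even integer. -/
noncomputable def nearEven (x : ℝ) : ℤ := 2 * round (x / 2)

lemma even_nearEven (x : ℝ) : Even (nearEven x) := ⟨round (x/2), by rw [nearEven]; ring⟩

lemma abs_sub_nearEven (x : ℝ) : |x - nearEven x| ≤ 1 := by
  have h := abs_sub_round (x / 2)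
  have h2 : x - (nearEven x : ℝ) = 2 * (x / 2 - round (x / 2)) := by
    simp only [nearEven]; push_cast; ring
  rw [h2, abs_mul, abs_of_nonneg (by norm_num : (0:ℝ) ≤ 2)]
  linarith

lemma abs_sub_nearEven_lt (x : ℝ) (hx : Irrational x) : |x - nearEven x| < 1 := by
  rcases lt_or_eq_of_le (abs_sub_nearEven x) with h | h
  · exact h
  · exfalso
    rcases (abs_eq (by norm_num : (0:ℝ) ≤ 1)).1 h with h1 | h1
    · exact (hx.sub_intCast (nearEven x)).ne_int 1 (by exact_mod_cast h1)
    · exact (hx.sub_intCast (nearEven x)).ne_int (-1) (by push_cast; linarith)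

/-- Uniqueness of an even integer at distance < 1. -/
lemma even_near_unique {x : ℝ} {m k : ℤ} (hm : Even m) (hk : Even k)
    (h1 : |x - m| < 1) (h2 : |x - k| < 1) : m = k := by
  have h3 : |(m : ℝ) - k| < 2 := by
    calc |(m:ℝ) - k| = |(x - k) - (x - m)| := by ring_nf
    _ ≤ |x - k| + |x - m| := abs_sub _ _
    _ < 2 := by linarith
  have h4 : |m - k| < 2 := by
    have : |((m - k : ℤ) : ℝ)| < 2 := by push_cast; exact h3
    exact_mod_cast this
  have h5 := abs_lt.1 h4
  rcases hm with ⟨a, ha⟩; rcases hk with ⟨c, hc⟩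
  omega
/-- Complete quotients of the canonical even continued fraction. -/
noncomputable def cq (x : ℝ) : ℕ → ℝ
  | 0 => x
  | n+1 => (cq x n - nearEven (cq x n))⁻¹

@[simp] lemma cq_zero (x : ℝ) : cq x 0 = x := rfl
lemma cq_succ (x : ℝ) (n : ℕ) : cq x (n+1) = (cq x n - nearEven (cq x n))⁻¹ := rfl

/-- Canonical even continued fraction coefficients. -/
noncomputable def canon (x : ℝ) (n : ℕ) : ℤ := nearEven (cq x n)

lemma irrational_step {y : ℝ} (hy : Irrational y) :
    Irrational ((y - nearEven y)⁻¹) ∧ 1 < |(y - nearEven y)⁻¹| := by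
  have h1 : Irrational (y - nearEven y) := hy.sub_intCast _
  have h0 : (y - (nearEven y : ℝ)) ≠ 0 := h1.ne_zero
  refine ⟨h1.inv, ?_⟩
  rw [abs_inv]
  rw [one_lt_inv_iff₀]
  exact ⟨abs_pos.2 h0, abs_sub_nearEven_lt y hy⟩

lemma cq_irrational {x : ℝ} (hx : Irrational x) (n : ℕ) : Irrational (cq x n) := by
  induction n with
  | zero => exact hx
  | succ n ih => exact (irrational_step ih).1

lemma cq_abs {x : ℝ} (hx : Irrational x) (n : ℕ) : 1 < |cq x (n+1)| :=
  (irrational_step (cq_irrational hx n)).2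

lemma canon_even (x : ℝ) (n : ℕ) : Even (canon x n) := even_nearEven _

lemma canon_abs {x : ℝ} (hx : Irrational x) (n : ℕ) : 2 ≤ |canon x (n+1)| := by
  have h1 := cq_abs hx n
  have h2 := abs_sub_nearEven (cq x (n+1))
  have h3 : 0 < |canon x (n+1)| := by
    rw [abs_pos]
    intro h0
    rw [canon] at h0
    rw [h0] at h2
    push_cast at h2
    simp at h2
    linarith
  have h4 := canon_even x (n+1)
  rcases h4 with ⟨a, ha⟩
  have h5 : (1:ℤ) ≤ |canon x (n+1)| := h3
  rcases abs_le.1 (le_refl |canon x (n+1)|) with _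
  rcases le_or_gt 0 (canon x (n+1)) with h6 | h6
  · rw [abs_of_nonneg h6] at h5 ⊢; omega
  · rw [abs_of_neg h6] at h5 ⊢; omega

lemma cq_shift (x : ℝ) (n : ℕ) : cq x (n+1) = cq ((x - nearEven x)⁻¹) n := by
  induction n with
  | zero => rfl
  | succ n ih => rw [cq_succ, ih, cq_succ]

lemma canon_shift (x : ℝ) (n : ℕ) : canon x (n+1) = canon ((x - nearEven x)⁻¹) n := by
  rw [canon, canon, cq_shift]
/-- `(q_{n-1}, q_n)` denominator pairs. -/
def qd (b : ℕ → ℤ) : ℕ → ℤ × ℤ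
  | 0 => (0, 1)
  | n+1 => ((qd b n).2, b (n+1) * (qd b n).2 + (qd b n).1)

/-- `(p_{n-1}, p_n)` numerator pairs. -/
def pd (b : ℕ → ℤ) : ℕ → ℤ × ℤ
  | 0 => (1, b 0)
  | n+1 => ((pd b n).2, b (n+1) * (pd b n).2 + (pd b n).1)

lemma qd_growth {b : ℕ → ℤ} (hb : ∀ i ≥ 1, 2 ≤ |b i|) (n : ℕ) :
    |(qd b n).1| + 1 ≤ |(qd b n).2| ∧ (n + 1 : ℤ) ≤ |(qd b n).2| := by
  induction n with
  | zero => simp [qd]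
  | succ n ih =>
    obtain ⟨ih1, ih2⟩ := ih
    have hbn : 2 ≤ |b (n+1)| := hb (n+1) (by omega)
    have key : |(qd b n).2| + 1 ≤ |b (n+1) * (qd b n).2 + (qd b n).1| := by
      have h1 : |b (n+1) * (qd b n).2| - |(qd b n).1| ≤ |b (n+1) * (qd b n).2 + (qd b n).1| := by
        have := abs_add_le (b (n+1) * (qd b n).2 + (qd b n).1) (-(qd b n).1)
        simp at this
        linarith [this, abs_mul (b (n+1)) (qd b n).2]
      rw [abs_mul] at h1
      nlinarith [abs_nonneg (qd b n).2, abs_nonneg (qd b n).1]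
    constructor
    · show |(qd b n).2| + 1 ≤ _
      exact key
    · show (n + 1 + 1 : ℤ) ≤ |b (n+1) * (qd b n).2 + (qd b n).1|
      push_cast
      linarith

lemma pq_det {b : ℕ → ℤ} (n : ℕ) :
    (pd b n).2 * (qd b n).1 - (pd b n).1 * (qd b n).2 = (-1)^(n+1) := by
  induction n with
  | zero => simp [pd, qd]
  | succ n ih =>
    show (b (n+1) * (pd b n).2 + (pd b n).1) * (qd b n).2
        - (pd b n).2 * (b (n+1) * (qd b n).2 + (qd b n).1) = _
    rw [pow_succ]
    nlinarith [ih]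

/-- Real value of a finite continued fraction with a prescribed real tail. -/
noncomputable def rcf : List ℤ → ℝ → ℝ
  | [], y => y
  | k :: t, y => (k : ℝ) + (rcf t y)⁻¹

@[simp] lemma rcf_nil (y : ℝ) : rcf [] y = y := rfl
@[simp] lemma rcf_cons (k : ℤ) (t : List ℤ) (y : ℝ) :
    rcf (k :: t) y = (k : ℝ) + (rcf t y)⁻¹ := rfl

lemma rcf_append_singleton (l : List ℤ) (k : ℤ) (y : ℝ) :
    rcf (l ++ [k]) y = rcf l ((k : ℝ) + y⁻¹) := by
  induction l with
  | nil => rfl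
  | cons j t ih => simp [ih]

/-- The canonical complete-quotient identity: x = [b0,…,b_{n-1}; cq x n]. -/
lemma rcf_cq {x : ℝ} (hx : Irrational x) (n : ℕ) :
    x = rcf ((List.range n).map (canon x)) (cq x n) := by
  induction n with
  | zero => simp
  | succ n ih =>
    rw [List.range_succ, List.map_append]
    simp only [List.map_cons, List.map_nil]
    rw [rcf_append_singleton]
    have h1 : (cq x (n+1))⁻¹ = cq x n - canon x n := by
      rw [cq_succ, inv_inv, canon]
    rw [h1]
    have : (canon x n : ℝ) + (cq x n - canon x n) = cq x n := by ring
    rw [this]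
    exact ih

lemma denom_pos {b : ℕ → ℤ} (hb : ∀ i ≥ 1, 2 ≤ |b i|) (n : ℕ) {y : ℝ}
    (hy : 1 < |y|) : 1 < |((qd b n).2 : ℝ) * y + ((qd b n).1 : ℝ)| := by
  obtain ⟨h1, h2⟩ := qd_growth hb n
  have h1' : |((qd b n).1 : ℝ)| + 1 ≤ |((qd b n).2 : ℝ)| := by exact_mod_cast h1
  have h3 : |((qd b n).2 : ℝ) * y| - |((qd b n).1 : ℝ)|
      ≤ |((qd b n).2 : ℝ) * y + ((qd b n).1 : ℝ)| := by
    have := abs_add_le (((qd b n).2 : ℝ) * y + ((qd b n).1 : ℝ)) (-((qd b n).1 : ℝ))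
    simp only [add_neg_cancel_right, abs_neg] at this
    linarith [this]
  rw [abs_mul] at h3
  nlinarith [abs_nonneg (((qd b n).1 : ℝ)), abs_nonneg (((qd b n).2 : ℝ))]

/-- Matrix formula for `rcf`. -/
lemma rcf_formula {b : ℕ → ℤ} (hb : ∀ i ≥ 1, 2 ≤ |b i|) (n : ℕ) (y : ℝ)
    (hy : 1 < |y|) :
    rcf ((List.range (n+1)).map b) y
      = (((pd b n).2 : ℝ) * y + ((pd b n).1 : ℝ)) / (((qd b n).2 : ℝ) * y + ((qd b n).1 : ℝ)) := by
  induction n generalizing y with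
  | zero =>
    have hy0 : y ≠ 0 := by intro h; rw [h] at hy; simp at hy; linarith
    have hr : List.range 1 = [0] := rfl
    simp [pd, qd, hr]
    field_simp
  | succ n ih =>
    have hy0 : y ≠ 0 := by intro h; rw [h] at hy; simp at hy; linarith
    rw [List.range_succ, List.map_append]
    simp only [List.map_cons, List.map_nil]
    rw [rcf_append_singleton]
    have hbn : 2 ≤ |b (n+1)| := hb (n+1) (by omega)
    have hy' : 1 < |(b (n+1) : ℝ) + y⁻¹| := by
      have h1 : |(y:ℝ)⁻¹| < 1 := by
        rw [abs_inv]; rw [inv_lt_one_iff₀]; right; exact hy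
      have h2 : (2 : ℝ) ≤ |(b (n+1) : ℝ)| := by exact_mod_cast hbn
      have := abs_add_le ((b (n+1) : ℝ) + y⁻¹) (-y⁻¹)
      simp only [add_neg_cancel_right, abs_neg] at this
      linarith
    rw [ih _ hy']
    have hd1 : ((qd b n).2 : ℝ) * ((b (n+1) : ℝ) + y⁻¹) + ((qd b n).1 : ℝ) ≠ 0 := by
      have := denom_pos hb n hy'
      intro h; rw [h] at this; simp at this; linarith
    have hd2 : ((qd b (n+1)).2 : ℝ) * y + ((qd b (n+1)).1 : ℝ) ≠ 0 := by
      have := denom_pos hb (n+1) hy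
      intro h; rw [h] at this; simp at this; linarith
    have hq2 : ((qd b (n+1)).2 : ℝ) = (b (n+1) : ℝ) * ((qd b n).2 : ℝ) + ((qd b n).1 : ℝ) := by
      show (((b (n+1) * (qd b n).2 + (qd b n).1 : ℤ)) : ℝ) = _; push_cast; ring
    have hq1 : ((qd b (n+1)).1 : ℝ) = ((qd b n).2 : ℝ) := rfl
    have hp2 : ((pd b (n+1)).2 : ℝ) = (b (n+1) : ℝ) * ((pd b n).2 : ℝ) + ((pd b n).1 : ℝ) := by
      show (((b (n+1) * (pd b n).2 + (pd b n).1 : ℤ)) : ℝ) = _; push_cast; ring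
    have hp1 : ((pd b (n+1)).1 : ℝ) = ((pd b n).2 : ℝ) := rfl
    rw [hq2, hq1, hp2, hp1] at *
    field_simp
    ring
lemma cfVal_append_big (l : List ℤ) (hl : ∀ j ∈ l, 2 ≤ |j|) (k : ℤ) (hk : 2 ≤ |k|) :
    ∃ v : ℚ, cfVal (l ++ [k]) = Option.some v ∧ 1 < |v| ∧ (v : ℝ) = rcf l (k : ℝ) := by
  induction l with
  | nil =>
    refine ⟨(k : ℚ), ?_, ?_, by simp⟩
    · simp [cfVal, cfInv]
    · have : (2:ℚ) ≤ |(k:ℚ)| := by exact_mod_cast hk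
      linarith
  | cons j t ih =>
    obtain ⟨v, hv, hv1, hvr⟩ := ih (fun a ha => hl a (List.mem_cons_of_mem j ha))
    have hj : 2 ≤ |j| := hl j (List.mem_cons_self)
    have hv0 : v ≠ 0 := by intro h; rw [h] at hv1; simp at hv1; linarith
    refine ⟨(j : ℚ) + v⁻¹, ?_, ?_, ?_⟩
    · show cfVal (j :: (t ++ [k])) = _
      rw [cfVal, hv]
      simp [cfInv, hv0]
    · have h1 : |v⁻¹| < 1 := by
        rw [abs_inv, inv_lt_one_iff₀]; right; exact hv1
      have h2 : (2:ℚ) ≤ |(j:ℚ)| := by exact_mod_cast hj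
      have := abs_add_le ((j:ℚ) + v⁻¹) (-v⁻¹)
      simp only [add_neg_cancel_right, abs_neg] at this
      linarith
    · push_cast
      rw [hvr]
      simp

/-- Values of nonempty EICF lists with all entries of absolute value ≥ 2 are > 1. -/
lemma cfVal_big : ∀ l : List ℤ, l ≠ [] → (∀ j ∈ l, 2 ≤ |j|) →
    ∃ v : ℚ, cfVal l = Option.some v ∧ 1 < |v| := by
  intro l
  induction l with
  | nil => intro h; exact absurd rfl h
  | cons j t ih =>
    intro _ hl
    have hj : 2 ≤ |j| := hl j (List.mem_cons_self)
    cases t with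
    | nil =>
      refine ⟨(j:ℚ), by simp [cfVal, cfInv], ?_⟩
      have : (2:ℚ) ≤ |(j:ℚ)| := by exact_mod_cast hj
      linarith
    | cons a s =>
      obtain ⟨v, hv, hv1⟩ := ih (by simp) (fun x hx => hl x (List.mem_cons_of_mem j hx))
      have hv0 : v ≠ 0 := by intro h; rw [h] at hv1; simp at hv1; linarith
      refine ⟨(j:ℚ) + v⁻¹, ?_, ?_⟩
      · rw [cfVal, hv]; simp [cfInv, hv0]
      · have h1 : |v⁻¹| < 1 := by
          rw [abs_inv, inv_lt_one_iff₀]; right; exact hv1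
        have h2 : (2:ℚ) ≤ |(j:ℚ)| := by exact_mod_cast hj
        have := abs_add_le ((j:ℚ) + v⁻¹) (-v⁻¹)
        simp only [add_neg_cancel_right, abs_neg] at this
        linarith

lemma range_map_shift (b : ℕ → ℤ) (n : ℕ) :
    (List.range (n+2)).map b = b 0 :: (List.range (n+1)).map (fun i => b (i+1)) := by
  rw [List.range_succ_eq_map]
  simp [Function.comp]

lemma cfConv_shift (b : ℕ → ℤ) (n : ℕ) :
    cfConv b (n+1) = (cfInv (cfConv (fun i => b (i+1)) n)).map (fun q => (b 0 : ℚ) + q) := by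
  rw [cfConv, cfConv, range_map_shift, cfVal]
lemma range_map_shift' (b : ℕ → ℤ) (n : ℕ) :
    (List.range (n+1)).map b = b 0 :: (List.range n).map (fun i => b (i+1)) := by
  rw [List.range_succ_eq_map]
  simp [Function.comp]

lemma two_le_abs_of_even_ne_zero {m : ℤ} (he : Even m) (h0 : m ≠ 0) : 2 ≤ |m| := by
  rcases he with ⟨a, ha⟩
  rcases le_or_gt 0 m with h | h
  · rw [abs_of_nonneg h]; omega
  · rw [abs_of_neg h]; omega

lemma conv_est {x : ℝ} (hx : Irrational x) (n : ℕ) :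
    ∃ v : ℚ, cfConv (canon x) (n+1) = Option.some v ∧ |x - (v : ℝ)| ≤ 1/(n+2) := by
  set b := canon x with hb
  have hb2 : ∀ i ≥ 1, 2 ≤ |b i| := by
    intro i hi
    cases i with
    | zero => omega
    | succ j => exact canon_abs hx j
  -- decompose the list
  have hlist : (List.range (n+2)).map b
      = b 0 :: ((List.range n).map (fun i => b (i+1)) ++ [b (n+1)]) := by
    rw [range_map_shift' b (n+1), List.range_succ, List.map_append]
    rfl
  have htail : ∀ j ∈ (List.range n).map (fun i => b (i+1)), 2 ≤ |j| := by
    intro j hj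
    simp only [List.mem_map] at hj
    obtain ⟨i, _, rfl⟩ := hj
    exact hb2 (i+1) (by omega)
  obtain ⟨v, hv, hv1, hvr⟩ := cfVal_append_big _ htail (b (n+1)) (hb2 (n+1) (by omega))
  have hv0 : v ≠ 0 := by intro h; rw [h] at hv1; simp at hv1; linarith
  have hw : cfConv b (n+1) = Option.some ((b 0 : ℚ) + v⁻¹) := by
    rw [cfConv, hlist, cfVal, hv]
    simp [cfInv, hv0]
  refine ⟨(b 0 : ℚ) + v⁻¹, hw, ?_⟩
  -- real value of the convergent
  have hyb : 1 < |((b (n+1) : ℤ) : ℝ)| := by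
    have := hb2 (n+1) (by omega)
    have : (2:ℝ) ≤ |((b (n+1) : ℤ) : ℝ)| := by exact_mod_cast this
    linarith
  have hval : (((b 0 : ℚ) + v⁻¹ : ℚ) : ℝ) = rcf ((List.range (n+1)).map b) ((b (n+1) : ℤ) : ℝ) := by
    rw [range_map_shift' b n, rcf_cons]
    push_cast
    rw [hvr]
  rw [hval, rcf_formula hb2 n _ hyb]
  -- x's formula
  have hxf : x = (((pd b (n+1)).2 : ℝ) * cq x (n+2) + ((pd b (n+1)).1 : ℝ))
      / (((qd b (n+1)).2 : ℝ) * cq x (n+2) + ((qd b (n+1)).1 : ℝ)) := by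
    have h1 := rcf_cq hx (n+2)
    rw [← hb] at h1
    conv_lhs => rw [h1, rcf_formula hb2 (n+1) _ (cq_abs hx (n+1))]
  -- rewrite the convergent as p_{n+1}/q_{n+1}
  have hpq : (((pd b n).2 : ℝ) * ((b (n+1) : ℤ) : ℝ) + ((pd b n).1 : ℝ))
      / (((qd b n).2 : ℝ) * ((b (n+1) : ℤ) : ℝ) + ((qd b n).1 : ℝ))
      = ((pd b (n+1)).2 : ℝ) / ((qd b (n+1)).2 : ℝ) := by
    have e1 : ((pd b (n+1)).2 : ℝ) = (b (n+1) : ℝ) * ((pd b n).2 : ℝ) + ((pd b n).1 : ℝ) := by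
      show (((b (n+1) * (pd b n).2 + (pd b n).1 : ℤ)) : ℝ) = _; push_cast; ring
    have e2 : ((qd b (n+1)).2 : ℝ) = (b (n+1) : ℝ) * ((qd b n).2 : ℝ) + ((qd b n).1 : ℝ) := by
      show (((b (n+1) * (qd b n).2 + (qd b n).1 : ℤ)) : ℝ) = _; push_cast; ring
    rw [e1, e2]; ring_nf
  rw [hpq]
  -- the error estimate
  set P := ((pd b (n+1)).2 : ℝ)
  set Pp := ((pd b (n+1)).1 : ℝ)
  set Q := ((qd b (n+1)).2 : ℝ)
  set Qq := ((qd b (n+1)).1 : ℝ)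
  set Y := cq x (n+2) with hY
  have hdet : P * Qq - Pp * Q = (-1:ℝ)^(n+2) := by
    have := pq_det (b := b) (n+1)
    have : ((((pd b (n+1)).2 * (qd b (n+1)).1 - (pd b (n+1)).1 * (qd b (n+1)).2 : ℤ)) : ℝ)
        = ((((-1:ℤ))^(n+2) : ℤ) : ℝ) := by exact_mod_cast congrArg (fun z : ℤ => (z:ℝ)) this
    push_cast at this
    linarith [this]
  have hQ : (n+2 : ℝ) ≤ |Q| := by
    have := (qd_growth hb2 (n+1)).2
    have h2 : ((n + 1 + 1 : ℤ) : ℝ) ≤ |Q| := by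
      rw [show |Q| = ((|(qd b (n+1)).2| : ℤ) : ℝ) by push_cast; rfl]
      exact_mod_cast this
    push_cast at h2
    linarith
  have hQ0 : Q ≠ 0 := by intro h; rw [h] at hQ; simp at hQ; linarith [hQ]
  have hD : 1 < |Q * Y + Qq| := denom_pos hb2 (n+1) (cq_abs hx (n+1))
  have hD0 : Q * Y + Qq ≠ 0 := by intro h; rw [h] at hD; simp at hD; linarith
  have hdiff : x - P / Q = (Q * Pp - P * Qq) / (Q * (Q * Y + Qq)) := by
    rw [hxf, div_sub_div _ _ hD0 hQ0]
    congr 1 <;> ring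
  rw [hdiff, abs_div]
  have hnum : |Q * Pp - P * Qq| = 1 := by
    have : Q * Pp - P * Qq = -((-1:ℝ))^(n+2) := by linarith [hdet]
    rw [this, abs_neg, abs_pow, abs_neg, abs_one, one_pow]
  rw [hnum]
  rw [abs_mul]
  rw [div_le_div_iff₀ (by positivity) (by positivity)]
  have h1 : 1 ≤ |Q * Y + Qq| := le_of_lt hD
  nlinarith [abs_nonneg (Q * Y + Qq), abs_nonneg Q]

lemma canonical_expansion {x : ℝ} (hx : Irrational x) :
    IsEICFExpansion (canon x) (((x : ℝ) : OnePoint ℝ)) := by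
  refine ⟨⟨fun i => canon_even x i, fun i hi => ?_⟩, ?_⟩
  · cases i with
    | zero => omega
    | succ j =>
      have := canon_abs hx j
      intro h; rw [h] at this; simp at this
  · rw [show (fun n => toOP (cfConv (canon x) n)) = fun n => toOP (cfConv (canon x) n) from rfl]
    rw [← tendsto_add_atTop_iff_nat 1]
    set u : ℕ → ℝ := fun n => (((cfConv (canon x) (n+1)).getD 0 : ℚ) : ℝ) with hu
    have hkey : ∀ n, toOP (cfConv (canon x) (n+1)) = ((u n : ℝ) : OnePoint ℝ)
        ∧ |x - u n| ≤ 1/(n+2) := by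
      intro n
      obtain ⟨v, hv, hest⟩ := conv_est hx n
      constructor
      · rw [hv, toOP]
        simp [hu, hv]
      · rw [hu]; simp only [hv, Option.getD_some]; exact hest
    have hu_tendsto : Tendsto u atTop (𝓝 x) := by
      rw [tendsto_iff_dist_tendsto_zero]
      apply squeeze_zero (fun n => dist_nonneg) (fun n => ?_)
        (g := fun n : ℕ => 1/((n:ℝ)+1))
      · exact tendsto_one_div_add_atTop_nhds_zero_nat
      · rw [Real.dist_eq, abs_sub_comm]
        calc |x - u n| ≤ 1/(n+2) := (hkey n).2
        _ ≤ 1/((n:ℝ)+1) := by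
            apply div_le_div_of_nonneg_left (by norm_num) (by positivity) (by linarith)
    have := (OnePoint.continuous_coe (X := ℝ)).continuousAt.tendsto.comp hu_tendsto
    refine this.congr fun n => ?_
    exact ((hkey n).1).symm
lemma shift_analysis {x : ℝ} (hx : Irrational x) {b : ℕ → ℤ}
    (hexp : IsEICFExpansion b (((x : ℝ) : OnePoint ℝ))) :
    b 0 = nearEven x ∧
      IsEICFExpansion (fun i => b (i+1)) ((((x - nearEven x)⁻¹ : ℝ) : OnePoint ℝ)) := by
  obtain ⟨⟨heven, hne⟩, htend⟩ := hexp
  set b' : ℕ → ℤ := fun i => b (i+1) with hb'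
  have hb2 : ∀ j : ℕ, 2 ≤ |b' j| :=
    fun j => two_le_abs_of_even_ne_zero (heven (j+1)) (hne (j+1) (by omega))
  -- the tail convergents are big rationals
  have hvn : ∀ n : ℕ, ∃ v : ℚ, cfConv b' n = Option.some v ∧ 1 < |v| := by
    intro n
    apply cfVal_big
    · simp [cfConv]
    · intro j hj
      simp only [List.mem_map] at hj
      obtain ⟨i, _, rfl⟩ := hj
      exact hb2 i
  set v : ℕ → ℚ := fun n => (cfConv b' n).getD 0 with hv
  have hvs : ∀ n, cfConv b' n = Option.some (v n) ∧ 1 < |v n| := by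
    intro n
    obtain ⟨w, hw, hw1⟩ := hvn n
    rw [hv]; simp only [hw, Option.getD_some]; exact ⟨trivial, hw1⟩
  have hv0 : ∀ n, v n ≠ 0 := by
    intro n h
    have := (hvs n).2; rw [h] at this; simp at this; linarith
  -- the convergents of b
  have hconv : ∀ n, cfConv b (n+1) = Option.some ((b 0 : ℚ) + (v n)⁻¹) := by
    intro n
    rw [cfConv_shift, ← hb', (hvs n).1]
    simp [cfInv, hv0 n]
  set c : ℕ → ℝ := fun n => ((v n : ℚ) : ℝ) with hc
  have hc1 : ∀ n, 1 < |c n| := by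
    intro n
    have := (hvs n).2
    rw [hc]
    simp only []
    exact_mod_cast this
  have hc0 : ∀ n, c n ≠ 0 := by
    intro n h
    have := hc1 n; rw [h] at this; simp at this; linarith
  -- extract real convergence
  have hshift : Tendsto (fun n => toOP (cfConv b (n+1))) atTop (𝓝 ((x : ℝ) : OnePoint ℝ)) :=
    (tendsto_add_atTop_iff_nat 1).2 htend
  have hreal : Tendsto (fun n => (b 0 : ℝ) + (c n)⁻¹) atTop (𝓝 x) := by
    rw [OnePoint.isOpenEmbedding_coe.tendsto_nhds_iff]
    refine hshift.congr fun n => ?_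
    rw [hconv n, toOP]
    push_cast
    rfl
  have hinv : Tendsto (fun n => (c n)⁻¹) atTop (𝓝 (x - b 0)) := by
    have := hreal.sub_const (b 0 : ℝ)
    refine this.congr fun n => by ring
  -- |x - b 0| < 1 and b 0 = nearEven x
  have hxb : Irrational (x - (b 0 : ℤ)) := hx.sub_intCast (b 0)
  have hle : |x - (b 0 : ℝ)| ≤ 1 := by
    have habs : Tendsto (fun n => |(c n)⁻¹|) atTop (𝓝 |x - (b 0 : ℝ)|) := hinv.abs
    refine le_of_tendsto habs (Filter.Eventually.of_forall fun n => ?_)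
    rw [abs_inv]
    have := hc1 n
    rw [inv_le_one_iff₀]
    right; linarith
  have hlt : |x - (b 0 : ℝ)| < 1 := by
    rcases lt_or_eq_of_le hle with h | h
    · exact h
    · exfalso
      rcases (abs_eq (by norm_num : (0:ℝ) ≤ 1)).1 h with h1 | h1
      · exact hxb.ne_int 1 (by exact_mod_cast h1)
      · exact hxb.ne_int (-1) (by push_cast; linarith)
  have hb0 : b 0 = nearEven x :=
    even_near_unique (heven 0) (even_nearEven x) hlt (abs_sub_nearEven_lt x hx)
  refine ⟨hb0, ⟨⟨fun i => heven (i+1), fun i _ => hne (i+1) (by omega)⟩, ?_⟩⟩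
  -- tail convergence
  have hx0 : x - (b 0 : ℝ) ≠ 0 := hxb.ne_zero
  have hcinv : Tendsto c atTop (𝓝 ((x - (b 0 : ℝ))⁻¹)) := by
    have := hinv.inv₀ hx0
    refine this.congr fun n => inv_inv (c n)
  rw [← hb0]
  have := (OnePoint.continuous_coe (X := ℝ)).continuousAt.tendsto.comp hcinv
  refine this.congr fun n => ?_
  rw [(hvs n).1, toOP]
  rfl

lemma eicf_uniq : ∀ (n : ℕ) (x : ℝ), Irrational x → ∀ b : ℕ → ℤ,
    IsEICFExpansion b (((x : ℝ) : OnePoint ℝ)) → b n = canon x n := by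
  intro n
  induction n with
  | zero =>
    intro x hx b hexp
    exact (shift_analysis hx hexp).1
  | succ n ih =>
    intro x hx b hexp
    obtain ⟨h0, htail⟩ := shift_analysis hx hexp
    have hx' : Irrational ((x - nearEven x)⁻¹) := (hx.sub_intCast _).inv
    have := ih _ hx' _ htail
    rw [canon_shift]
    exact this

/-- Every irrational real number has exactly one infinite even-integer continued
fraction expansion. -/
theorem eicf_expansion_of_irrational_exists_unique (x : ℝ) (hx : Irrational x) :
    ∃! b : ℕ → ℤ, IsEICFExpansion b ((x : ℝ) : OnePoint ℝ) := by
  refine ⟨canon x, canonical_expansion hx, ?_⟩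
  intro c hc
  funext n
  exact eicf_uniq n x hx c hc
end

section
/- The number 1 has exactly two infinite even-integer continued fraction expansions, namely [0,2,−2,2,−2,…] and [2,−2,2,−2,…]. -/
open Filter Topology OnePoint

namespace EICF

def shf (a : ℕ → ℤ) : ℕ → ℤ := fun i => a (i + 1)

def Good (a : ℕ → ℤ) : Prop := ∀ i, 2 ≤ |a i|

lemma Good.shf {a : ℕ → ℤ} (h : Good a) : Good (shf a) := fun i => h (i + 1)

lemma Good.cast {a : ℕ → ℤ} (h : Good a) (i : ℕ) : (2 : ℝ) ≤ |(a i : ℝ)| := by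
  have := h i
  rw [← Int.cast_abs]
  exact_mod_cast this

noncomputable def F : ℕ → (ℕ → ℤ) → ℝ
  | 0, a => (a 0 : ℝ)
  | n + 1, a => (a 0 : ℝ) + 1 / F n (shf a)

lemma F_lb : ∀ (n : ℕ) (a : ℕ → ℤ), Good a → ((n : ℝ) + 2) / ((n : ℝ) + 1) ≤ |F n a| := by
  intro n
  induction n with
  | zero =>
    intro a ha
    simpa [F] using ha.cast 0
  | succ n ih =>
    intro a ha
    have h1 := ih (shf a) ha.shf
    have hn : (0:ℝ) ≤ (n:ℝ) := Nat.cast_nonneg n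
    have hFpos : (0:ℝ) < |F n (shf a)| := lt_of_lt_of_le (by positivity) h1
    have h2 : |1 / F n (shf a)| ≤ ((n : ℝ) + 1) / ((n : ℝ) + 2) := by
      rw [abs_div, abs_one, div_le_div_iff₀ hFpos (by positivity)]
      rw [div_le_iff₀ (by positivity)] at h1
      nlinarith
    have h2' : |1 / F n (shf a)| * ((n:ℝ) + 2) ≤ (n:ℝ) + 1 :=
      (le_div_iff₀ (by positivity)).mp h2
    have h0 := ha.cast 0
    have h3 : |(a 0 : ℝ)| - |1 / F n (shf a)| ≤ |F (n+1) a| := by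
      have := abs_sub_abs_le_abs_sub ((a 0 : ℝ)) (-(1 / F n (shf a)))
      simpa [F, sub_neg_eq_add] using this
    rw [div_le_iff₀ (by positivity)]
    push_cast
    nlinarith [abs_nonneg (1 / F n (shf a))]

lemma F_ne_zero {n : ℕ} {a : ℕ → ℤ} (ha : Good a) : F n a ≠ 0 := by
  have h := F_lb n a ha
  intro h0
  rw [h0, abs_zero] at h
  have hn : (0:ℝ) ≤ (n:ℝ) := Nat.cast_nonneg n
  nlinarith [div_pos (by linarith : (0:ℝ) < (n:ℝ)+2) (by linarith : (0:ℝ) < (n:ℝ)+1)]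

lemma F_one_le {n : ℕ} {a : ℕ → ℤ} (ha : Good a) : 1 ≤ |F n a| := by
  have h := F_lb n a ha
  have hn : (0:ℝ) ≤ (n:ℝ) := Nat.cast_nonneg n
  have : (1:ℝ) ≤ ((n : ℝ) + 2) / ((n : ℝ) + 1) := by
    rw [le_div_iff₀ (by positivity)]; linarith
  linarith

lemma F_diff : ∀ (n : ℕ) (a : ℕ → ℤ), Good a →
    |F (n+1) a - F n a| ≤ 1 / (((n:ℝ) + 1) * ((n:ℝ) + 2)) := by
  intro n
  induction n with
  | zero =>
    intro a ha
    have h1 : (2:ℝ) ≤ |F 0 (shf a)| := by simpa [F] using (ha.shf).cast 0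
    have h2 : F 0 (shf a) ≠ 0 := F_ne_zero ha.shf
    have : |F 1 a - F 0 a| = 1 / |F 0 (shf a)| := by
      simp [F, abs_div, abs_inv]
    rw [this]
    rw [div_le_div_iff₀ (by positivity) (by norm_num)]
    norm_num; linarith
  | succ n ih =>
    intro a ha
    have hd := ih (shf a) ha.shf
    have hlb1 := F_lb n (shf a) ha.shf
    have hlb2 := F_lb (n+1) (shf a) ha.shf
    have hz1 : F n (shf a) ≠ 0 := F_ne_zero ha.shf
    have hz2 : F (n+1) (shf a) ≠ 0 := F_ne_zero ha.shf
    have key : F (n+2) a - F (n+1) a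
        = (F n (shf a) - F (n+1) (shf a)) / (F (n+1) (shf a) * F n (shf a)) := by
      show ((a 0 : ℝ) + 1 / F (n+1) (shf a)) - ((a 0 : ℝ) + 1 / F n (shf a)) = _
      field_simp
      ring
    rw [key, abs_div, abs_mul]
    have hn : (0:ℝ) ≤ (n:ℝ) := Nat.cast_nonneg n
    have hp1 : (0:ℝ) < |F n (shf a)| := lt_of_lt_of_le (by positivity) hlb1
    have hp2 : (0:ℝ) < |F (n+1) (shf a)| := lt_of_lt_of_le (by positivity) hlb2
    rw [div_le_div_iff₀ (by positivity) (by positivity)]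
    have habs : |F n (shf a) - F (n+1) (shf a)| ≤ 1 / (((n:ℝ) + 1) * ((n:ℝ) + 2)) := by
      rw [abs_sub_comm]; exact hd
    rw [div_le_iff₀ (by positivity)] at hlb1
    rw [div_le_iff₀ (by positivity)] at hlb2
    have habs' : |F n (shf a) - F (n+1) (shf a)| * (((n:ℝ) + 1) * ((n:ℝ) + 2)) ≤ 1 :=
      (le_div_iff₀ (by positivity)).mp habs
    push_cast at hlb2 ⊢
    nlinarith [abs_nonneg (F n (shf a) - F (n+1) (shf a)), mul_pos hp1 hp2,
      mul_le_mul hlb1 hlb2 (by positivity) (by positivity),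
      mul_le_mul_of_nonneg_right habs' (by positivity : (0:ℝ) ≤ (n:ℝ) + 3)]

lemma F_cauchy (n : ℕ) (a : ℕ → ℤ) (ha : Good a) :
    ∀ k, |F (n+k) a - F n a| ≤ 1 / ((n:ℝ) + 1) - 1 / ((n:ℝ) + (k:ℝ) + 1) := by
  intro k
  induction k with
  | zero => simp
  | succ k ih =>
    have hd := F_diff (n+k) a ha
    have h3 : |F (n+k+1) a - F n a| ≤ |F (n+k+1) a - F (n+k) a| + |F (n+k) a - F n a| := by
      have := abs_sub_le (F (n+k+1) a) (F (n+k) a) (F n a)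
      simpa using this
    have hn : (0:ℝ) ≤ (n:ℝ) := Nat.cast_nonneg n
    have hk : (0:ℝ) ≤ (k:ℝ) := Nat.cast_nonneg k
    have heq : 1 / (((n:ℝ)+(k:ℝ)) + 1) - 1 / (((n:ℝ)+(k:ℝ)) + 2)
        = 1 / ((((n:ℝ)+(k:ℝ)) + 1) * (((n:ℝ)+(k:ℝ)) + 2)) := by
      field_simp; ring
    have : ((n:ℝ)+(k:ℝ)) = ((n+k : ℕ) : ℝ) := by push_cast; ring
    push_cast at hd h3 ih ⊢
    calc |F (n+(k+1)) a - F n a| ≤ |F (n+k+1) a - F (n+k) a| + |F (n+k) a - F n a| := by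
          simpa [show n+(k+1) = n+k+1 by ring] using h3
      _ ≤ 1 / (((n:ℝ)+(k:ℝ) + 1) * ((n:ℝ)+(k:ℝ) + 2)) + (1 / ((n:ℝ) + 1) - 1 / ((n:ℝ) + (k:ℝ) + 1)) := by
          exact add_le_add hd ih
      _ = 1 / ((n:ℝ) + 1) - 1 / ((n:ℝ) + ((k:ℝ)+1) + 1) := by
          field_simp
          ring

noncomputable def L (a : ℕ → ℤ) : ℝ := limUnder atTop (fun n => F n a)

lemma F_cauchySeq (a : ℕ → ℤ) (ha : Good a) : CauchySeq (fun n => F n a) := by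
  refine cauchySeq_of_le_tendsto_0 (fun N => 1 / ((N:ℝ) + 1)) (fun m n N hm hn => ?_) ?_
  ·
    rcases le_total m n with h | h
    · obtain ⟨k, rfl⟩ := Nat.exists_eq_add_of_le h
      rw [Real.dist_eq, abs_sub_comm]
      have := F_cauchy m a ha k
      have h2 : 1 / ((m:ℝ) + 1) ≤ 1 / ((N:ℝ) + 1) := by
        apply one_div_le_one_div_of_le (by positivity)
        exact_mod_cast by omega
      have h3 : 0 ≤ 1 / ((m:ℝ) + (k:ℝ) + 1) := by positivity
      linarith
    · obtain ⟨k, rfl⟩ := Nat.exists_eq_add_of_le h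
      rw [Real.dist_eq]
      have := F_cauchy n a ha k
      have h2 : 1 / ((n:ℝ) + 1) ≤ 1 / ((N:ℝ) + 1) := by
        apply one_div_le_one_div_of_le (by positivity)
        exact_mod_cast by omega
      have h3 : 0 ≤ 1 / ((n:ℝ) + (k:ℝ) + 1) := by positivity
      linarith
  · have : Tendsto (fun N : ℕ => 1 / ((N:ℝ) + 1)) atTop (𝓝 0) :=
      tendsto_one_div_add_atTop_nhds_zero_nat
    exact this

lemma L_tendsto (a : ℕ → ℤ) (ha : Good a) : Tendsto (fun n => F n a) atTop (𝓝 (L a)) :=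
  (F_cauchySeq a ha).tendsto_limUnder

lemma L_dist (a : ℕ → ℤ) (ha : Good a) (n : ℕ) : |L a - F n a| ≤ 1 / ((n:ℝ) + 1) := by
  have h1 : Tendsto (fun k => F (k + n) a) atTop (𝓝 (L a)) :=
    (L_tendsto a ha).comp (tendsto_add_atTop_nat n)
  have h2 : Tendsto (fun k => |F (k + n) a - F n a|) atTop (𝓝 (|L a - F n a|)) :=
    ((h1.sub tendsto_const_nhds).abs)
  apply le_of_tendsto h2
  filter_upwards with k
  have := F_cauchy n a ha k
  have h3 : 0 ≤ 1 / ((n:ℝ) + (k:ℝ) + 1) := by positivity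
  rw [Nat.add_comm k n]
  linarith

lemma L_one_le (a : ℕ → ℤ) (ha : Good a) : 1 ≤ |L a| := by
  have h1 := L_dist a ha 0
  have h2 : (2:ℝ) ≤ |F 0 a| := by simpa [F] using ha.cast 0
  have := abs_sub_abs_le_abs_sub (F 0 a) (L a)
  rw [abs_sub_comm] at this
  norm_num at h1
  linarith

lemma L_ne_zero (a : ℕ → ℤ) (ha : Good a) : L a ≠ 0 := by
  intro h
  have := L_one_le a ha
  rw [h, abs_zero] at this
  linarith

lemma L_shift (a : ℕ → ℤ) (ha : Good a) : L a = (a 0 : ℝ) + 1 / L (shf a) := by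
  have h1 : Tendsto (fun k => F (k + 1) a) atTop (𝓝 (L a)) :=
    (L_tendsto a ha).comp (tendsto_add_atTop_nat 1)
  have h2' : Tendsto (fun n => 1 / F n (shf a)) atTop (𝓝 (1 / L (shf a))) := by
    simpa [one_div] using (L_tendsto (shf a) ha.shf).inv₀ (L_ne_zero (shf a) ha.shf)
  have h2 : Tendsto (fun n => (a 0 : ℝ) + 1 / F n (shf a)) atTop
      (𝓝 ((a 0 : ℝ) + 1 / L (shf a))) := h2'.const_add _
  have h3 : (fun k => F (k + 1) a) = fun n => (a 0 : ℝ) + 1 / F n (shf a) := by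
    funext n; rfl
  rw [h3] at h1
  exact tendsto_nhds_unique h1 h2

lemma inv_abs_le (x : ℝ) (h : 1 ≤ |x|) : |1 / x| ≤ 1 := by
  rw [abs_div, abs_one, div_le_one (by linarith)]
  exact h

lemma step_pm (a : ℕ → ℤ) (ha : Good a) :
    (L a = 1 → a 0 = 2 ∧ L (shf a) = -1) ∧ (L a = -1 → a 0 = -2 ∧ L (shf a) = 1) := by
  have hs := L_shift a ha
  have hb := L_one_le (shf a) ha.shf
  have hnz := L_ne_zero (shf a) ha.shf
  have hinv := inv_abs_le (L (shf a)) hb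
  have h0 := ha.cast 0
  constructor
  · intro h1
    rw [h1] at hs
    have ha0 : (a 0 : ℝ) = 2 := by
      rcases abs_cases ((a 0 : ℝ)) with ⟨e, _⟩ | ⟨e, _⟩ <;>
        rcases abs_cases (1 / L (shf a)) with ⟨e2, _⟩ | ⟨e2, _⟩ <;> nlinarith
    have ha0' : a 0 = 2 := by exact_mod_cast ha0
    refine ⟨ha0', ?_⟩
    rw [ha0] at hs
    field_simp at hs
    linarith
  · intro h1
    rw [h1] at hs
    have ha0 : (a 0 : ℝ) = -2 := by
      rcases abs_cases ((a 0 : ℝ)) with ⟨e, _⟩ | ⟨e, _⟩ <;>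
        rcases abs_cases (1 / L (shf a)) with ⟨e2, _⟩ | ⟨e2, _⟩ <;> nlinarith
    have ha0' : a 0 = -2 := by exact_mod_cast ha0
    refine ⟨ha0', ?_⟩
    rw [ha0] at hs
    field_simp at hs
    linarith

lemma rigidity : ∀ (n : ℕ) (a : ℕ → ℤ), Good a →
    (L a = 1 → a n = if Even n then 2 else -2) ∧
    (L a = -1 → a n = if Even n then -2 else 2) := by
  intro n
  induction n with
  | zero =>
    intro a ha
    refine ⟨fun h => ?_, fun h => ?_⟩
    · simpa using ((step_pm a ha).1 h).1
    · simpa using ((step_pm a ha).2 h).1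
  | succ n ih =>
    intro a ha
    refine ⟨fun h => ?_, fun h => ?_⟩
    · have h2 := ((step_pm a ha).1 h).2
      have h4 : a (n+1) = if Even n then -2 else 2 := (ih (shf a) ha.shf).2 h2
      rw [h4]
      by_cases he : Even n <;> simp [he, Nat.even_add_one]
    · have h2 := ((step_pm a ha).2 h).2
      have h4 : a (n+1) = if Even n then 2 else -2 := (ih (shf a) ha.shf).1 h2
      rw [h4]
      by_cases he : Even n <;> simp [he, Nat.even_add_one]

def alt1 : ℕ → ℤ := fun n => if Even n then 2 else -2
def alt2 : ℕ → ℤ := fun n => if Even n then -2 else 2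

lemma good_alt1 : Good alt1 := by intro i; unfold alt1; split <;> norm_num
lemma good_alt2 : Good alt2 := by intro i; unfold alt2; split <;> norm_num

lemma shf_alt1 : shf alt1 = alt2 := by
  funext i; simp only [shf, alt1, alt2, Nat.even_add_one]
  by_cases h : Even i <;> simp [h]

lemma shf_alt2 : shf alt2 = alt1 := by
  funext i; simp only [shf, alt1, alt2, Nat.even_add_one]
  by_cases h : Even i <;> simp [h]

lemma L_alt1 : L alt1 = 1 ∧ L alt2 = -1 := by
  have h1 := L_shift alt1 good_alt1
  have h2 := L_shift alt2 good_alt2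
  rw [shf_alt1] at h1
  rw [shf_alt2] at h2
  have hz1 := L_ne_zero alt1 good_alt1
  have hz2 := L_ne_zero alt2 good_alt2
  have e1 : (alt1 0 : ℝ) = 2 := by norm_num [alt1]
  have e2 : (alt2 0 : ℝ) = -2 := by norm_num [alt2]
  rw [e1] at h1; rw [e2] at h2
  set u := L alt1; set v := L alt2
  have k1 : u * v = 2 * v + 1 := by field_simp at h1; linarith
  have k2 : u * v = -2 * u + 1 := by field_simp at h2; nlinarith
  have hv : v = -u := by nlinarith
  have hu : u = 1 := by nlinarith
  exact ⟨hu, by rw [hv, hu]⟩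

lemma cfVal_eq : ∀ (n : ℕ) (a : ℕ → ℤ), Good a →
    ∃ r : ℚ, cfVal ((List.range (n+1)).map a) = Option.some r ∧ (r : ℝ) = F n a ∧ r ≠ 0 := by
  intro n
  induction n with
  | zero =>
    intro a ha
    refine ⟨(a 0 : ℚ), ?_, by simp [F], ?_⟩
    · simp [cfVal, cfInv]
    · have h2 := ha 0
      intro h
      have h0 : a 0 = 0 := by exact_mod_cast h
      rw [h0] at h2
      simp at h2
  | succ n ih =>
    intro a ha
    obtain ⟨r, hr, hcast, hne⟩ := ih (shf a) ha.shf
    have hlist : (List.range (n+2)).map a = a 0 :: (List.range (n+1)).map (shf a) := by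
      rw [List.range_succ_eq_map]
      simp [List.map_map]
      intro i _
      rfl
    refine ⟨(a 0 : ℚ) + r⁻¹, ?_, ?_, ?_⟩
    · rw [hlist]
      simp [cfVal, hr, cfInv, hne]
    · push_cast
      rw [hcast]
      simp [F, one_div]
    · intro h
      have : ((((a 0 : ℚ) + r⁻¹ : ℚ)) : ℝ) = 0 := by rw [h]; simp
      rw [show ((((a 0 : ℚ) + r⁻¹ : ℚ)) : ℝ) = F (n+1) a by push_cast; rw [hcast]; simp [F, one_div]] at this
      exact F_ne_zero ha this

lemma conv_tendsto (b : ℕ → ℤ) (hg : Good (shf b)) :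
    Tendsto (fun n => toOP (cfConv b n)) atTop
      (𝓝 (((b 0 : ℝ) + 1 / L (shf b) : ℝ) : OnePoint ℝ)) := by
  rw [← tendsto_add_atTop_iff_nat 1]
  have key : ∀ n : ℕ, toOP (cfConv b (n + 1))
      = ((((b 0 : ℝ) + 1 / F n (shf b)) : ℝ) : OnePoint ℝ) := by
    intro n
    obtain ⟨r, hr, hcast, hne⟩ := cfVal_eq n (shf b) hg
    have hlist : (List.range (n+2)).map b = b 0 :: (List.range (n+1)).map (shf b) := by
      rw [List.range_succ_eq_map]
      simp [List.map_map]
      intro i _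
      rfl
    have : cfConv b (n+1) = Option.some ((b 0 : ℚ) + r⁻¹) := by
      unfold cfConv
      rw [hlist]
      simp [cfVal, hr, cfInv, hne]
    rw [this]
    show ((((b 0 : ℚ) + r⁻¹ : ℚ) : ℝ) : OnePoint ℝ) = _
    congr 1
    push_cast
    rw [hcast, one_div]
  rw [show (fun n => toOP (cfConv b (n + 1)))
      = fun n => ((((b 0 : ℝ) + 1 / F n (shf b)) : ℝ) : OnePoint ℝ) from funext key]
  apply (OnePoint.continuous_coe.tendsto _).comp
  have h2' : Tendsto (fun n => 1 / F n (shf b)) atTop (𝓝 (1 / L (shf b))) := by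
    simpa [one_div] using (L_tendsto (shf b) hg).inv₀ (L_ne_zero (shf b) hg)
  exact h2'.const_add _

end EICF
/-- The number 1 has exactly two infinite even-integer continued fraction expansions,
namely [0,2,−2,2,−2,…] and [2,−2,2,−2,…]. -/
theorem eicf_expansions_of_one (b : ℕ → ℤ) :
    IsEICFExpansion b ((1 : ℝ) : OnePoint ℝ) ↔
      b = (fun k => if k = 0 then 0 else if Odd k then 2 else -2) ∨
        b = (fun k => if Even k then 2 else -2) := by
  constructor
  · rintro ⟨⟨heven, hnz⟩, hlim⟩
    have hg : EICF.Good (EICF.shf b) := by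
      intro i
      obtain ⟨r, hr⟩ := heven (i + 1)
      have h2 := hnz (i + 1) (by omega)
      simp only [EICF.shf]
      rcases le_or_gt 0 (b (i + 1)) with h | h
      · rw [abs_of_nonneg h]; omega
      · rw [abs_of_neg h]; omega
    have hlim2 := EICF.conv_tendsto b hg
    have huniq := tendsto_nhds_unique hlim2 hlim
    have hX : (b 0 : ℝ) + 1 / EICF.L (EICF.shf b) = 1 := OnePoint.coe_eq_coe.mp huniq
    have hb1 := EICF.L_one_le (EICF.shf b) hg
    have hnz' := EICF.L_ne_zero (EICF.shf b) hg
    have hinv := EICF.inv_abs_le (EICF.L (EICF.shf b)) hb1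
    have hb0r : (0:ℝ) ≤ (b 0 : ℝ) ∧ (b 0 : ℝ) ≤ 2 := by
      rcases abs_cases (1 / EICF.L (EICF.shf b)) with ⟨e, _⟩ | ⟨e, _⟩ <;>
        constructor <;> nlinarith
    have hb0 : b 0 = 0 ∨ b 0 = 2 := by
      obtain ⟨r, hr⟩ := heven 0
      have h1 : (0:ℤ) ≤ b 0 := by exact_mod_cast hb0r.1
      have h2 : b 0 ≤ 2 := by exact_mod_cast hb0r.2
      omega
    rcases hb0 with h0 | h0
    · left
      have hL : EICF.L (EICF.shf b) = 1 := by
        rw [h0] at hX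
        push_cast at hX
        field_simp at hX
        linarith
      have hrig := fun n => (EICF.rigidity n (EICF.shf b) hg).1 hL
      funext k
      cases k with
      | zero => simpa using h0
      | succ k =>
        have : b (k + 1) = if Even k then 2 else -2 := hrig k
        rw [this]
        by_cases he : Even k <;> simp [he, Nat.odd_add_one, Nat.not_even_iff_odd]
    · right
      have hL : EICF.L (EICF.shf b) = -1 := by
        rw [h0] at hX
        push_cast at hX
        field_simp at hX
        linarith
      have hrig := fun n => (EICF.rigidity n (EICF.shf b) hg).2 hL
      funext k
      cases k with
      | zero => simpa using h0
      | succ k =>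
        have : b (k + 1) = if Even k then -2 else 2 := hrig k
        rw [this]
        by_cases he : Even k <;> simp [he, Nat.even_add_one]
  · rintro (rfl | rfl)
    · have hshf : EICF.shf (fun k => if k = 0 then (0:ℤ) else if Odd k then 2 else -2)
          = EICF.alt1 := by
        funext i
        simp only [EICF.shf, EICF.alt1, Nat.odd_add_one]
        by_cases h : Even i <;> simp [h]
      refine ⟨⟨?_, ?_⟩, ?_⟩
      · intro i
        by_cases h0 : i = 0
        · simp [h0]
        · by_cases ho : Odd i
          · simp only [if_neg h0, if_pos ho]; exact ⟨1, rfl⟩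
          · simp only [if_neg h0, if_neg ho]; exact ⟨-1, by norm_num⟩
      · intro i hi
        have h0 : i ≠ 0 := by omega
        by_cases ho : Odd i <;> simp [h0, ho]
      · have hg : EICF.Good (EICF.shf fun k => if k = 0 then (0:ℤ) else if Odd k then 2 else -2) :=
          hshf ▸ EICF.good_alt1
        have h := EICF.conv_tendsto _ hg
        rw [hshf, EICF.L_alt1.1] at h
        norm_num at h
        exact h
    · have hshf : EICF.shf (fun k => if Even k then (2:ℤ) else -2) = EICF.alt2 := by
        funext i
        simp only [EICF.shf, EICF.alt2, Nat.even_add_one]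
        by_cases h : Even i <;> simp [h]
      refine ⟨⟨?_, ?_⟩, ?_⟩
      · intro i
        by_cases h : Even i
        · simp only [if_pos h]; exact ⟨1, rfl⟩
        · simp only [if_neg h]; exact ⟨-1, by norm_num⟩
      · intro i hi
        by_cases h : Even i <;> simp [h]
      · have hg : EICF.Good (EICF.shf fun k => if Even k then (2:ℤ) else -2) :=
          hshf ▸ EICF.good_alt2
        have h := EICF.conv_tendsto _ hg
        rw [hshf, EICF.L_alt1.2] at h
        norm_num at h
        exact h
end

section
/- The theta group consists exactly of the Möbius transformations z ↦ (az+b)/(cz+d) with integer a,b,c,d, ad − bc = 1, and (a,b,c,d) ≡ (1,0,0,1) or (0,1,1,0) mod 2; equivalently, the subgroup of PSL(2,ℤ) generated by z ↦ −1/z and z ↦ z + 2 equals the set of such transformations. -/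
open Filter Topology OnePoint

abbrev SL2Z := Matrix.SpecialLinearGroup (Fin 2) ℤ

/-- The matrix of s(z) = −1/z. -/
def Smat : SL2Z := ⟨!![0, -1; 1, 0], by norm_num [Matrix.det_fin_two_of]⟩

/-- The matrix of h(z) = z + 2. -/
def Hmat : SL2Z := ⟨!![1, 2; 0, 1], by norm_num [Matrix.det_fin_two_of]⟩

/-- PSL(2,ℤ), the modular group. -/
abbrev PSL2Z := SL2Z ⧸ Subgroup.center SL2Z

/-- The projection SL(2,ℤ) → PSL(2,ℤ). -/
abbrev toPSL : SL2Z →* PSL2Z := QuotientGroup.mk' (Subgroup.center SL2Z)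

/-! Since `Smat ^ 2 = -1`, the preimage of the theta group in SL(2,ℤ) contains the centre `±1`,
so it suffices to work in SL(2,ℤ). There `Smat` reduces mod 2 to the antidiagonal involution and
`Hmat` to the identity, so the generated group consists of matrices congruent mod 2 to the identity
or to the antidiagonal matrix. Conversely, for such a matrix with columns `(a, c)`, `(b, d)` the
entries `a` and `c` have opposite parity, so if `c ≠ 0` some `q` gives `|a + 2qc| < |c|`; left
multiplication by `Smat * Hmat ^ q` makes `a + 2qc` the new lower-left entry, and descent on `|c|`
ends at an upper triangular matrix `±Hmat ^ k`. -/

open scoped MatrixGroups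
open Matrix.SpecialLinearGroup

theorem Subgroup.mem_zpowers_iff_of_sq_eq_one {G : Type*} [Group G] {x y : G} (hx : x ^ 2 = 1) :
    y ∈ Subgroup.zpowers x ↔ y = 1 ∨ y = x := by
  refine ⟨?_, by rintro (rfl | rfl) <;> simp [Subgroup.mem_zpowers]⟩
  intro hy
  obtain ⟨k, rfl⟩ := Subgroup.mem_zpowers_iff.mp hy
  have hx' : x ^ (2 : ℤ) = 1 := mod_cast hx
  rcases Int.emod_two_eq k with hk | hk
  all_goals
    rw [← Int.mul_ediv_add_emod k 2, zpow_add, zpow_mul, hx', one_zpow, one_mul, hk]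
    simp

theorem Matrix.SpecialLinearGroup.eq_one_or_eq_neg_one_of_mem_center {R : Type*} [CommRing R]
    [NoZeroDivisors R] {A : SL(2, R)} (hA : A ∈ Subgroup.center SL(2, R)) : A = 1 ∨ A = -1 := by
  obtain ⟨r, hr, hrA⟩ := mem_center_iff.mp hA
  rcases sq_eq_one_iff.mp (by simpa using hr : r ^ 2 = 1) with rfl | rfl
  · exact Or.inl (Subtype.ext (by rw [coe_one, ← hrA, map_one]))
  · exact Or.inr (Subtype.ext (by rw [coe_neg, coe_one, ← hrA, map_neg, map_one]))

theorem Int.exists_natAbs_add_two_mul_mul_lt {a c : ℤ} (hc : c ≠ 0) (hac : Odd (a + c)) :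
    ∃ q : ℤ, (a + 2 * q * c).natAbs < c.natAbs := by
  -- `a.bmod m` is the residue of `a` modulo `2c` in `[-|c|, |c|)`; it has the parity of `a`,
  -- which differs from that of `c`, so it is not `-|c|`.
  set m := 2 * c.natAbs
  have hm : 0 < m := by omega
  have hlo := Int.le_bmod (x := a) hm
  have hhi := Int.bmod_lt (x := a) hm
  obtain ⟨t, ht⟩ : 2 * c ∣ a - a.bmod m := by
    rw [← Int.natAbs_dvd, Int.natAbs_mul]
    exact Int.ModEq.dvd Int.bmod_emod
  refine ⟨-t, ?_⟩
  have hr : a + 2 * -t * c = a.bmod m := by linarith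
  obtain ⟨u, hu⟩ : Even (a - a.bmod m) := ⟨c * t, by rw [ht]; ring⟩
  rw [hr]
  obtain ⟨k, hk⟩ := hac
  omega

namespace ThetaGroup

def thetaSL : Subgroup SL2Z := Subgroup.closure {Smat, Hmat}

lemma Smat_mem : Smat ∈ thetaSL := Subgroup.subset_closure (by simp)

lemma Hmat_mem : Hmat ∈ thetaSL := Subgroup.subset_closure (by simp)

lemma neg_one_mem : (-1 : SL2Z) ∈ thetaSL := by
  rw [show (-1 : SL2Z) = Smat ^ 2 by decide]
  exact pow_mem Smat_mem 2

lemma center_le_thetaSL : Subgroup.center SL2Z ≤ thetaSL := fun A hA ↦ by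
  rcases eq_one_or_eq_neg_one_of_mem_center hA with rfl | rfl
  exacts [thetaSL.one_mem, neg_one_mem]

lemma toPSL_mem_closure_iff (M : SL2Z) :
    toPSL M ∈ Subgroup.closure {toPSL Smat, toPSL Hmat} ↔ M ∈ thetaSL := by
  rw [← Set.image_pair, ← MonoidHom.map_closure, ← Subgroup.mem_comap, Subgroup.comap_map_eq_self]
  · rfl
  · exact (QuotientGroup.ker_mk' _).trans_le center_le_thetaSL

lemma coe_Hmat_zpow (k : ℤ) :
    ((Hmat ^ k : SL2Z) : Matrix (Fin 2) (Fin 2) ℤ) = !![1, 2 * k; 0, 1] := by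
  rw [show Hmat = ModularGroup.T ^ (2 : ℤ) by decide, ← _root_.zpow_mul, ModularGroup.coe_T_zpow]

lemma Smat_mul_Hmat_zpow_mul_apply_one_zero (q : ℤ) (M : SL2Z) :
    (Smat * Hmat ^ q * M) 1 0 = M 0 0 + 2 * q * M 1 0 := by
  rw [coe_mul, coe_mul, coe_Hmat_zpow]
  simp [Smat, Matrix.mul_apply, Fin.sum_univ_two]

abbrev reduceModTwo : SL2Z →* SL(2, ZMod 2) := map (Int.castRingHom (ZMod 2))

def thetaCongr : Subgroup SL2Z := (Subgroup.zpowers (reduceModTwo Smat)).comap reduceModTwo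

lemma mem_thetaCongr_iff (M : SL2Z) : M ∈ thetaCongr ↔
    ((Odd ((M : Matrix (Fin 2) (Fin 2) ℤ) 0 0) ∧ Even ((M : Matrix (Fin 2) (Fin 2) ℤ) 0 1) ∧
        Even ((M : Matrix (Fin 2) (Fin 2) ℤ) 1 0) ∧ Odd ((M : Matrix (Fin 2) (Fin 2) ℤ) 1 1)) ∨
       (Even ((M : Matrix (Fin 2) (Fin 2) ℤ) 0 0) ∧ Odd ((M : Matrix (Fin 2) (Fin 2) ℤ) 0 1) ∧
        Odd ((M : Matrix (Fin 2) (Fin 2) ℤ) 1 0) ∧ Even ((M : Matrix (Fin 2) (Fin 2) ℤ) 1 1))) := by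
  rw [thetaCongr, Subgroup.mem_comap, Subgroup.mem_zpowers_iff_of_sq_eq_one (by decide)]
  simp only [Matrix.SpecialLinearGroup.ext_iff, Fin.forall_fin_two, SL_reduction_mod_hom_val]
  simp [Smat, and_assoc, ZMod.intCast_eq_zero_iff_even, ZMod.intCast_eq_one_iff_odd]

lemma thetaSL_le_thetaCongr : thetaSL ≤ thetaCongr := by
  rw [thetaSL, Subgroup.closure_le]
  rintro _ (rfl | rfl)
  · exact Subgroup.mem_zpowers _
  · show reduceModTwo Hmat ∈ Subgroup.zpowers (reduceModTwo Smat)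
    rw [show reduceModTwo Hmat = 1 by decide]
    exact Subgroup.one_mem _

lemma mem_thetaSL_of_apply_one_zero_eq_zero {M : SL2Z} (hM : M ∈ thetaCongr) (hc : M 1 0 = 0) :
    M ∈ thetaSL := by
  obtain ⟨k, hk⟩ : Even (M 0 1) := by
    rcases (mem_thetaCongr_iff M).mp hM with h | h
    · exact h.2.1
    · exact absurd (hc ▸ h.2.2.1) Int.not_odd_zero
  have had : M 0 0 * M 1 1 = 1 := by
    have h := M.det_coe
    rwa [Matrix.det_fin_two, hc, mul_zero, sub_zero] at h
  rcases Int.eq_one_or_neg_one_of_mul_eq_one' had with ⟨ha, hd⟩ | ⟨ha, hd⟩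
  · have hMk : M = Hmat ^ k := by
      ext i j
      fin_cases i <;> fin_cases j <;> simp [coe_Hmat_zpow, ha, hd, hc, hk, two_mul]
    exact hMk ▸ zpow_mem Hmat_mem k
  · have hMk : M = -1 * Hmat ^ (-k) := by
      ext i j
      fin_cases i <;> fin_cases j <;> simp [coe_Hmat_zpow, ha, hd, hc, hk, two_mul]
    exact hMk ▸ mul_mem neg_one_mem (zpow_mem Hmat_mem _)

lemma thetaCongr_le_thetaSL : thetaCongr ≤ thetaSL := by
  intro M hM
  induction hn : (M 1 0).natAbs using Nat.strong_induction_on generalizing M with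
  | _ n ih =>
  by_cases hc : M 1 0 = 0
  · exact mem_thetaSL_of_apply_one_zero_eq_zero hM hc
  have hac : Odd (M 0 0 + M 1 0) := by
    rcases (mem_thetaCongr_iff M).mp hM with h | h
    exacts [h.1.add_even h.2.2.1, h.1.add_odd h.2.2.1]
  obtain ⟨q, hq⟩ := Int.exists_natAbs_add_two_mul_mul_lt hc hac
  have hSH : Smat * Hmat ^ q ∈ thetaSL := mul_mem Smat_mem (zpow_mem Hmat_mem q)
  have hN : Smat * Hmat ^ q * M ∈ thetaSL :=
    ih _ (hn ▸ hq) (mul_mem (thetaSL_le_thetaCongr hSH) hM)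
      (Smat_mul_Hmat_zpow_mul_apply_one_zero q M ▸ rfl)
  simpa [mul_assoc] using mul_mem (inv_mem hSH) hN

lemma thetaSL_eq_thetaCongr : thetaSL = thetaCongr :=
  le_antisymm thetaSL_le_thetaCongr thetaCongr_le_thetaSL

end ThetaGroup

/-- The subgroup of PSL(2,ℤ) generated by z ↦ −1/z and z ↦ z + 2 consists exactly of
the Möbius transformations z ↦ (az+b)/(cz+d) with ad − bc = 1 and matrix congruent
mod 2 to the identity or to the antidiagonal matrix. -/
theorem theta_group_eq_congruence_description (M : SL2Z) :
    toPSL M ∈ Subgroup.closure {toPSL Smat, toPSL Hmat} ↔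
      ((Odd ((M : Matrix (Fin 2) (Fin 2) ℤ) 0 0) ∧ Even ((M : Matrix (Fin 2) (Fin 2) ℤ) 0 1) ∧
        Even ((M : Matrix (Fin 2) (Fin 2) ℤ) 1 0) ∧ Odd ((M : Matrix (Fin 2) (Fin 2) ℤ) 1 1)) ∨
       (Even ((M : Matrix (Fin 2) (Fin 2) ℤ) 0 0) ∧ Odd ((M : Matrix (Fin 2) (Fin 2) ℤ) 0 1) ∧
        Odd ((M : Matrix (Fin 2) (Fin 2) ℤ) 1 0) ∧ Even ((M : Matrix (Fin 2) (Fin 2) ℤ) 1 1))) := by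
  rw [ThetaGroup.toPSL_mem_closure_iff, ThetaGroup.thetaSL_eq_thetaCongr]
  exact ThetaGroup.mem_thetaCongr_iff M
end
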